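/- arXiv:1705.08676 — 4 statements merged into one kernel-verified Lean document; each statement's English description precedes it below -/
import Mathlib

section
/- Let f : P → Q be a poset fibration between finite pure posets. Then the Möbius numbers satisfy μ̂(Q) = μ̂(P) + Σ_{q ∈ Q} μ̂(Q_{<q}) · μ̂(f^{-1}(Q_{≥q})), where Q_{<q} = {x ∈ Q : x < q} and f^{-1}(Q_{≥q}) = {p ∈ P : f(p) ≥ q}, each with the induced order. -/
attribute [local instance] Classical.propDecidable

noncomputable instance {α : Type*} [Fintype α] : Fintype (WithBot α) :=
  inferInstanceAs (Fintype (Option α))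
noncomputable instance {α : Type*} [Fintype α] : Fintype (WithTop α) :=
  inferInstanceAs (Fintype (Option α))

/-- The Möbius function of a finite partial order:
`mob a a = 1` and `∑_{a ≤ c ≤ b} mob a c = 0` for `a < b`. -/
noncomputable def mob {α : Type*} [Preorder α] [Fintype α] (a b : α) : ℤ :=
  letI := Classical.decEq α
  letI : @DecidableRel α α (· ≤ ·) := Classical.decRel _
  letI : @DecidableRel α α (· < ·) := Classical.decRel _
  letI : LocallyFiniteOrder α := Fintype.toLocallyFiniteOrder
  IncidenceAlgebra.mu ℤ a b

/-- The bounded poset obtained by adjoining a new minimum `0̂` and a new maximum `1̂`. -/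
abbrev Bd (α : Type*) := WithBot (WithTop α)

/-- The Möbius number `μ̂(P) = μ(0̂,1̂)` of a finite poset, computed after adjoining a
new minimum and a new maximum. -/
noncomputable def mobHat (α : Type*) [Preorder α] [Fintype α] : ℤ :=
  mob (⊥ : Bd α) ⊤

/-- A finite poset is pure if all of its maximal chains have the same size. -/
def IsPure (α : Type*) [PartialOrder α] : Prop :=
  ∀ s t : Set α, IsMaxChain (· ≤ ·) s → IsMaxChain (· ≤ ·) t → s.ncard = t.ncard

set_option linter.unusedSectionVars false

section MobLemmas
variable {α : Type*} [PartialOrder α] [Fintype α]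

lemma mob_self (a : α) : mob a a = 1 := by
  letI := Classical.decEq α
  letI : @DecidableRel α α (· ≤ ·) := Classical.decRel _
  letI : @DecidableRel α α (· < ·) := Classical.decRel _
  letI : LocallyFiniteOrder α := Fintype.toLocallyFiniteOrder
  show IncidenceAlgebra.mu ℤ a a = 1
  exact IncidenceAlgebra.mu_self a

lemma mob_sum_right' {a b : α} (hne : a ≠ b) (s : Finset α)
    (hs : ∀ x, x ∈ s ↔ a ≤ x ∧ x ≤ b) : ∑ x ∈ s, mob a x = 0 := by
  letI := Classical.decEq α
  letI : @DecidableRel α α (· ≤ ·) := Classical.decRel _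
  letI : @DecidableRel α α (· < ·) := Classical.decRel _
  letI : LocallyFiniteOrder α := Fintype.toLocallyFiniteOrder
  have hm : ∀ a b : α, mob a b = IncidenceAlgebra.mu ℤ a b := fun _ _ => rfl
  have hseq : s = Finset.Icc a b := Finset.ext fun x => by
    rw [hs x, Finset.mem_Icc]
  have h := IncidenceAlgebra.sum_Icc_mu_right (𝕜 := ℤ) a b
  rw [if_neg hne] at h
  rw [hseq, Finset.sum_congr rfl (fun x _ => hm a x), h]

lemma mob_sum_left' {a b : α} (hne : a ≠ b) (s : Finset α)
    (hs : ∀ x, x ∈ s ↔ a ≤ x ∧ x ≤ b) : ∑ x ∈ s, mob x b = 0 := by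
  letI := Classical.decEq α
  letI : @DecidableRel α α (· ≤ ·) := Classical.decRel _
  letI : @DecidableRel α α (· < ·) := Classical.decRel _
  letI : LocallyFiniteOrder α := Fintype.toLocallyFiniteOrder
  have hm : ∀ a b : α, mob a b = IncidenceAlgebra.mu ℤ a b := fun _ _ => rfl
  have hseq : s = Finset.Icc a b := Finset.ext fun x => by
    rw [hs x, Finset.mem_Icc]
  have h := IncidenceAlgebra.sum_Icc_mu_left (𝕜 := ℤ) a b
  rw [if_neg hne] at h
  rw [hseq, Finset.sum_congr rfl (fun x _ => hm x b), h]

lemma mob_eq_neg_sum {a b : α} (hne : a ≠ b) :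
    mob a b = -∑ x : α, (if a ≤ x ∧ x < b then mob a x else 0) := by
  letI := Classical.decEq α
  letI : @DecidableRel α α (· ≤ ·) := Classical.decRel _
  letI : @DecidableRel α α (· < ·) := Classical.decRel _
  letI : LocallyFiniteOrder α := Fintype.toLocallyFiniteOrder
  have hm : ∀ a b : α, mob a b = IncidenceAlgebra.mu ℤ a b := fun _ _ => rfl
  have h := IncidenceAlgebra.mu_eq_neg_sum_Ico_of_ne (𝕜 := ℤ) hne
  have key : (∑ x : α, if a ≤ x ∧ x < b then mob a x else 0)
      = ∑ x ∈ Finset.Ico a b, IncidenceAlgebra.mu ℤ a x := by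
    rw [← Finset.sum_filter]
    apply Finset.sum_congr
    · ext x; simp [Finset.mem_Ico]
    · intro x _; exact hm a x
  rw [hm a b, h, key]

end MobLemmas

universe u v

/-- The Möbius function only depends on the interval `[a, b]` as an abstract poset. -/
lemma mob_congr_aux :
    ∀ (n : ℕ) {α : Type u} {β : Type v} [PartialOrder α] [Fintype α] [PartialOrder β]
      [Fintype β] (f : α → β) (a b : α),
      (Finset.univ.filter fun x => a ≤ x ∧ x ≤ b).card ≤ n → a ≤ b →
      (∀ x y, a ≤ x → x ≤ b → a ≤ y → y ≤ b → (x ≤ y ↔ f x ≤ f y)) →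
      (∀ z, f a ≤ z → z ≤ f b → ∃ x, a ≤ x ∧ x ≤ b ∧ f x = z) →
      mob a b = mob (f a) (f b) := by
  intro n
  induction n with
  | zero =>
    intro α β _ _ _ _ f a b hcard hab h1 h2
    exact absurd hcard (by
      simp only [not_le, Finset.card_pos, Finset.filter_nonempty_iff]
      exact ⟨a, Finset.mem_univ a, le_rfl, hab⟩)
  | succ n ih =>
    intro α β _ _ _ _ f a b hcard hab h1 h2
    by_cases heq : a = b
    · subst heq; rw [mob_self, mob_self]
    · have hfab : f a ≤ f b := (h1 a b le_rfl hab hab le_rfl).mp hab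
      have hfne : f a ≠ f b := by
        intro h
        exact heq (le_antisymm hab ((h1 b a hab le_rfl le_rfl hab).mpr (h ▸ le_rfl)))
      rw [mob_eq_neg_sum heq, mob_eq_neg_sum hfne]
      congr 1
      have eA : (∑ x : α, if a ≤ x ∧ x < b then mob a x else 0)
          = ∑ x ∈ Finset.univ.filter (fun x => a ≤ x ∧ x < b), mob a x :=
        (Finset.sum_filter _ _).symm
      have eB : (∑ z : β, if f a ≤ z ∧ z < f b then mob (f a) z else 0)
          = ∑ z ∈ Finset.univ.filter (fun z => f a ≤ z ∧ z < f b), mob (f a) z :=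
        (Finset.sum_filter _ _).symm
      rw [eA, eB]
      apply Finset.sum_bij (i := fun x _ => f x)
      · intro x hx
        simp only [Finset.mem_filter, Finset.mem_univ, true_and] at hx ⊢
        obtain ⟨hax, hxb⟩ := hx
        have hfax : f a ≤ f x := (h1 a x le_rfl hab hax hxb.le).mp hax
        have hfxb : f x ≤ f b := (h1 x b hax hxb.le hab le_rfl).mp hxb.le
        refine ⟨hfax, lt_of_le_of_ne hfxb fun h => ?_⟩
        exact hxb.ne (le_antisymm hxb.le ((h1 b x hab le_rfl hax hxb.le).mpr (h ▸ le_rfl)))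
      · intro x1 hx1 x2 hx2 hfx
        simp only [Finset.mem_filter, Finset.mem_univ, true_and] at hx1 hx2
        exact le_antisymm
          ((h1 x1 x2 hx1.1 hx1.2.le hx2.1 hx2.2.le).mpr (hfx ▸ le_rfl))
          ((h1 x2 x1 hx2.1 hx2.2.le hx1.1 hx1.2.le).mpr (hfx ▸ le_rfl))
      · intro z hz
        simp only [Finset.mem_filter, Finset.mem_univ, true_and] at hz
        obtain ⟨x, hax, hxb, hfx⟩ := h2 z hz.1 hz.2.le
        have hxb' : x < b := lt_of_le_of_ne hxb fun h => hz.2.ne (by rw [← hfx, h])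
        exact ⟨x, by simp [hax, hxb'], hfx⟩
      · intro x hx
        simp only [Finset.mem_filter, Finset.mem_univ, true_and] at hx
        obtain ⟨hax, hxb⟩ := hx
        have hfxb : f x ≤ f b := (h1 x b hax hxb.le hab le_rfl).mp hxb.le
        apply ih f a x ?_ hax
        · intro u v hu hux hv hvx
          exact h1 u v hu (hux.trans hxb.le) hv (hvx.trans hxb.le)
        · intro z hz1 hz2
          obtain ⟨y, hy1, hy2, hy3⟩ := h2 z hz1 (hz2.trans hfxb)
          exact ⟨y, hy1, (h1 y x hy1 hy2 hax hxb.le).mpr (hy3 ▸ hz2), hy3⟩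
        · have hsub : (Finset.univ.filter fun y => a ≤ y ∧ y ≤ x)
              ⊆ (Finset.univ.filter fun y => a ≤ y ∧ y ≤ b).erase b := by
            intro y hy
            simp only [Finset.mem_filter, Finset.mem_univ, true_and] at hy
            refine Finset.mem_erase.mpr ⟨fun h => hxb.not_ge (h ▸ hy.2), ?_⟩
            · simp [hy.1, hy.2.trans hxb.le]
          have hb : b ∈ Finset.univ.filter fun y => a ≤ y ∧ y ≤ b := by simp [hab]
          have := Finset.card_le_card hsub
          rw [Finset.card_erase_of_mem hb] at this
          omega

lemma mob_congr {α : Type u} {β : Type v} [PartialOrder α] [Fintype α] [PartialOrder β]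
    [Fintype β] (f : α → β) (a b : α) (hab : a ≤ b)
    (h1 : ∀ x y, a ≤ x → x ≤ b → a ≤ y → y ≤ b → (x ≤ y ↔ f x ≤ f y))
    (h2 : ∀ z, f a ≤ z → z ≤ f b → ∃ x, a ≤ x ∧ x ≤ b ∧ f x = z) :
    mob a b = mob (f a) (f b) :=
  mob_congr_aux _ f a b le_rfl hab h1 h2

section BdLemmas
variable {γ : Type*} [PartialOrder γ] [Fintype γ]

/-- The canonical embedding of `γ` into `Bd γ`. -/
def kap (q : γ) : Bd γ := ((q : WithTop γ) : Bd γ)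

lemma sum_bd (F : Bd γ → ℤ) : ∑ x : Bd γ, F x = F ⊥ + F ⊤ + ∑ y : γ, F (kap y) := by
  have h1 : ∑ x : Bd γ, F x = F ⊥ + ∑ y : WithTop γ, F (Option.some y) := Fintype.sum_option F
  have h2 : ∑ y : WithTop γ, F (Option.some y) = F ⊤ + ∑ c : γ, F (kap c) :=
    Fintype.sum_option _
  rw [h1, h2]; ring

lemma kap_le_kap {q q' : γ} : kap q ≤ kap q' ↔ q ≤ q' := by simp [kap]

lemma bot_ne_kap (q : γ) : (⊥ : Bd γ) ≠ kap q := by simp [kap]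

lemma bd_bot_ne_top : (⊥ : Bd γ) ≠ ⊤ := fun h => WithBot.bot_ne_coe h

lemma not_top_le_kap (q : γ) : ¬ (⊤ : Bd γ) ≤ kap q := by simp [kap]

lemma not_kap_le_bot (q : γ) : ¬ kap q ≤ (⊥ : Bd γ) := by simp [kap]

lemma kap_ne_top (q : γ) : kap q ≠ (⊤ : Bd γ) := fun h => by
  exact absurd h (by simp [kap, ← WithBot.coe_top])

lemma not_top_le_bot : ¬ (⊤ : Bd γ) ≤ ⊥ := by simp

lemma kap_inj {q q' : γ} (h : kap q = kap q') : q = q' :=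
  le_antisymm (kap_le_kap.mp h.le) (kap_le_kap.mp h.ge)

/-- `μ̂(γ)` via the first row of the Möbius function. -/
lemma mobHat_eq_right : mobHat γ = -1 - ∑ y : γ, mob (⊥ : Bd γ) (kap y) := by
  have h := mob_sum_right' (a := (⊥ : Bd γ)) (b := (⊤ : Bd γ)) bd_bot_ne_top Finset.univ
    (fun x => by simp)
  have h' : mob (⊥ : Bd γ) ⊥ + mob (⊥ : Bd γ) ⊤ + ∑ y : γ, mob (⊥ : Bd γ) (kap y) = 0 :=
    (sum_bd (fun x => mob (⊥ : Bd γ) x)).symm.trans h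
  rw [mob_self] at h'
  unfold mobHat
  linarith

/-- `μ̂(γ)` via the last column of the Möbius function. -/
lemma mobHat_eq_left : mobHat γ = -1 - ∑ y : γ, mob (kap y) (⊤ : Bd γ) := by
  have h := mob_sum_left' (a := (⊥ : Bd γ)) (b := (⊤ : Bd γ)) bd_bot_ne_top Finset.univ
    (fun x => by simp)
  have h' : mob (⊥ : Bd γ) ⊤ + mob (⊤ : Bd γ) ⊤ + ∑ y : γ, mob (kap y) (⊤ : Bd γ) = 0 :=
    (sum_bd (fun x => mob x (⊤ : Bd γ))).symm.trans h
  rw [mob_self] at h'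
  unfold mobHat
  linarith

/-- The defining recursion, summed below a fixed element `q0`. -/
lemma sum_mob_bot_le (q0 : γ) :
    ∑ q : γ, (if q ≤ q0 then mob (⊥ : Bd γ) (kap q) else 0) = -1 := by
  classical
  have hs : ∀ x : Bd γ,
      x ∈ insert (⊥ : Bd γ) ((Finset.univ.filter fun q : γ => q ≤ q0).image kap)
        ↔ (⊥ : Bd γ) ≤ x ∧ x ≤ kap q0 := by
    intro x
    simp only [Finset.mem_insert, Finset.mem_image, Finset.mem_filter, Finset.mem_univ,
      true_and]
    constructor
    · rintro (rfl | ⟨q, hq, rfl⟩)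
      · exact ⟨le_rfl, bot_le⟩
      · exact ⟨bot_le, kap_le_kap.mpr hq⟩
    · rintro ⟨-, h2⟩
      rcases x with _ | (_ | y)
      · exact Or.inl rfl
      · exact absurd (show (⊤ : Bd γ) ≤ kap q0 from h2) (not_top_le_kap q0)
      · exact Or.inr ⟨y, kap_le_kap.mp (show kap y ≤ kap q0 from h2), rfl⟩
  have h := mob_sum_right' (a := (⊥ : Bd γ)) (b := kap q0) (bot_ne_kap q0) _ hs
  rw [Finset.sum_insert (by
    intro hmem
    simp only [Finset.mem_image, Finset.mem_filter, Finset.mem_univ, true_and] at hmem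
    obtain ⟨q, -, hq⟩ := hmem
    exact bot_ne_kap q hq.symm)] at h
  rw [Finset.sum_image (fun q _ q' _ hqq => kap_inj hqq)] at h
  rw [mob_self, Finset.sum_filter] at h
  linarith

/-- `μ(0̂, q̂) = μ̂(γ_{<q})`. -/
lemma mob_bot_kap (q : γ) : mobHat {x : γ // x < q} = mob (⊥ : Bd γ) (kap q) := by
  classical
  let g : Bd {x : γ // x < q} → Bd γ := fun z =>
    match z with
    | Option.none => ⊥
    | Option.some Option.none => kap q
    | Option.some (Option.some x) => kap x.val
  have hg : mob (⊥ : Bd {x : γ // x < q}) ⊤ = mob (g ⊥) (g ⊤) := by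
    apply mob_congr g ⊥ ⊤ bot_le
    · intro x y _ _ _ _
      rcases x with _ | (_ | x) <;> rcases y with _ | (_ | y)
      · exact iff_of_true le_rfl le_rfl
      · exact iff_of_true bot_le bot_le
      · exact iff_of_true bot_le bot_le
      · exact iff_of_false not_top_le_bot (not_kap_le_bot q)
      · exact iff_of_true le_rfl le_rfl
      · refine iff_of_false (not_top_le_kap y) ?_
        show ¬ kap q ≤ kap y.val
        rw [kap_le_kap]
        exact fun hc => absurd (lt_of_le_of_lt hc y.prop) (lt_irrefl q)
      · exact iff_of_false (not_kap_le_bot x) (not_kap_le_bot x.val)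
      · refine iff_of_true le_top ?_
        show kap x.val ≤ kap q
        exact kap_le_kap.mpr x.prop.le
      · show kap x ≤ kap y ↔ kap x.val ≤ kap y.val
        rw [kap_le_kap, kap_le_kap]
        exact Subtype.coe_le_coe.symm
    · intro z hz1 hz2
      rcases z with _ | (_ | x)
      · exact ⟨⊥, le_rfl, bot_le, rfl⟩
      · exact absurd (show (⊤ : Bd γ) ≤ kap q from hz2) (not_top_le_kap q)
      · have hz2' : kap x ≤ kap q := hz2
        rcases lt_or_eq_of_le (kap_le_kap.mp hz2') with h | h
        · exact ⟨kap (⟨x, h⟩ : {x : γ // x < q}), bot_le, le_top, rfl⟩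
        · refine ⟨⊤, bot_le, le_rfl, ?_⟩
          show kap q = kap x
          rw [h]
  exact hg

end BdLemmas

/-- `μ(p̂, 1̂)` computed in an upwards-closed sub-poset agrees with the ambient one. -/
lemma mob_kap_top_subtype {P : Type*} [PartialOrder P] [Fintype P] (pr : P → Prop)
    (hup : ∀ p p', pr p → p ≤ p' → pr p') (p0 : {p : P // pr p}) :
    mob (kap p0) (⊤ : Bd {p : P // pr p}) = mob (kap p0.val) (⊤ : Bd P) := by
  classical
  let g : Bd {p : P // pr p} → Bd P := fun z =>
    match z with
    | Option.none => ⊥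
    | Option.some Option.none => ⊤
    | Option.some (Option.some x) => kap x.val
  have hg : mob (kap p0) (⊤ : Bd {p : P // pr p}) = mob (g (kap p0)) (g ⊤) := by
    apply mob_congr g (kap p0) ⊤ le_top
    · intro x y hx _ hy _
      rcases x with _ | (_ | x) <;> rcases y with _ | (_ | y)
      · exact absurd hx (not_kap_le_bot p0)
      · exact absurd hx (not_kap_le_bot p0)
      · exact absurd hx (not_kap_le_bot p0)
      · exact absurd hy (not_kap_le_bot p0)
      · exact iff_of_true le_rfl le_rfl
      · exact iff_of_false (not_top_le_kap y) (not_top_le_kap y.val)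
      · exact absurd hy (not_kap_le_bot p0)
      · exact iff_of_true le_top le_top
      · show kap x ≤ kap y ↔ kap x.val ≤ kap y.val
        rw [kap_le_kap, kap_le_kap]
        exact Subtype.coe_le_coe.symm
    · intro z hz1 hz2
      rcases z with _ | (_ | p)
      · exact absurd (show kap p0.val ≤ (⊥ : Bd P) from hz1) (not_kap_le_bot p0.val)
      · exact ⟨⊤, le_top, le_rfl, rfl⟩
      · have hz1' : kap p0.val ≤ kap p := hz1
        have hle : p0.val ≤ p := kap_le_kap.mp hz1'
        refine ⟨kap (⟨p, hup p0.val p p0.prop hle⟩ : {p : P // pr p}), ?_, le_top, rfl⟩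
        exact kap_le_kap.mpr hle
  exact hg

/-- For a poset fibration `f : P → Q` between finite pure posets
(`f` surjective, order-preserving and rank-preserving, where the rank of an element
is the length of the longest chain below it, i.e. its height), the Möbius numbers
satisfy `μ̂(Q) = μ̂(P) + ∑_{q ∈ Q} μ̂(Q_{<q}) · μ̂(f⁻¹(Q_{≥q}))`. -/
theorem stmt0 {P Q : Type*} [PartialOrder P] [PartialOrder Q] [Fintype P] [Fintype Q]
    (hP : IsPure P) (hQ : IsPure Q)
    (f : P → Q) (hsurj : Function.Surjective f) (hmono : Monotone f)
    (hrank : ∀ p : P, Order.height (f p) = Order.height p) :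
    mobHat Q = mobHat P +
      ∑ q : Q, mobHat {x : Q // x < q} * mobHat {p : P // q ≤ f p} := by
  classical
  set b : Q → ℤ := fun q => mob (⊥ : Bd Q) (kap q) with hb
  set c : P → ℤ := fun p => mob (kap p) (⊤ : Bd P) with hc
  -- the fiber Möbius numbers
  have hfib : ∀ q : Q, mobHat {p : P // q ≤ f p}
      = -1 - ∑ p : P, (if q ≤ f p then c p else 0) := by
    intro q
    rw [mobHat_eq_left (γ := {p : P // q ≤ f p})]
    have h1 : ∀ p0 : {p : P // q ≤ f p},
        mob (kap p0) (⊤ : Bd {p : P // q ≤ f p}) = c p0.val := by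
      intro p0
      exact mob_kap_top_subtype (fun p => q ≤ f p)
        (fun p p' hp hle => hp.trans (hmono hle)) p0
    rw [Finset.sum_congr rfl (fun p0 _ => h1 p0)]
    congr 1
    rw [← Finset.sum_filter]
    exact (Finset.sum_subtype _ (by simp) _).symm
  -- the strict-lower-set Möbius numbers
  have hlow : ∀ q : Q, mobHat {x : Q // x < q} = b q := fun q => mob_bot_kap q
  rw [Finset.sum_congr rfl (fun q _ => by rw [hlow q, hfib q])]
  rw [mobHat_eq_right (γ := Q), mobHat_eq_left (γ := P)]
  have key : ∑ q : Q, b q * (-1 - ∑ p : P, if q ≤ f p then c p else 0)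
      = -∑ q : Q, b q + ∑ p : P, c p := by
    have e1 : ∀ q : Q, b q * (-1 - ∑ p : P, if q ≤ f p then c p else 0)
        = -b q - ∑ p : P, (if q ≤ f p then b q * c p else 0) := by
      intro q
      rw [show b q * (-1 - ∑ p : P, if q ≤ f p then c p else 0)
          = -b q - b q * ∑ p : P, (if q ≤ f p then c p else 0) from by ring]
      rw [Finset.mul_sum]
      congr 1
      apply Finset.sum_congr rfl
      intro p _
      split <;> simp
    rw [Finset.sum_congr rfl (fun q _ => e1 q), Finset.sum_sub_distrib]
    rw [Finset.sum_comm]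
    have e2 : ∀ p : P, ∑ q : Q, (if q ≤ f p then b q * c p else 0)
        = (∑ q : Q, if q ≤ f p then b q else 0) * c p := by
      intro p
      rw [Finset.sum_mul]
      apply Finset.sum_congr rfl
      intro q _
      split <;> simp
    rw [Finset.sum_congr rfl (fun p _ => e2 p)]
    have e3 : ∀ p : P, (∑ q : Q, if q ≤ f p then b q else 0) * c p = -c p := by
      intro p
      rw [sum_mob_bot_le (f p)]
      ring
    rw [Finset.sum_congr rfl (fun p _ => e3 p)]
    have h1 : ∑ x : P, -c x = -∑ x : P, c x := Finset.sum_neg_distrib _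
    have h2 : ∑ x : Q, -b x = -∑ x : Q, b x := Finset.sum_neg_distrib _
    rw [h1, h2]
    ring
  rw [key]
  ring
end

section
/- (Björner's theorem on subword order.) For words u ≤ w in subword order, μ(u,w) = (−1)^{|w|−|u|} · NE(u,w). -/
attribute [local instance] Classical.propDecidable

/-- The subsequence of the word `w` indexed by the set of positions `S`,
taken in increasing position order. -/
def subIdx {A : Type*} (w : List A) (S : Finset (Fin w.length)) : List A :=
  (S.sort (· ≤ ·)).map (w.get ·)

/-- The predecessor position. -/
def predPos {n : ℕ} (p : Fin n) : Fin n :=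
  ⟨p.1 - 1, lt_of_le_of_lt (Nat.sub_le p.1 1) p.2⟩

/-- `p` lies in the tail of a run of `w`: `p` is not the first position and `w` carries
equal letters at positions `p − 1` and `p` (so that `p` and `p − 1` lie in the same
maximal set of consecutive positions carrying equal letters). -/
def tailPosW {A : Type*} (w : List A) (p : Fin w.length) : Prop :=
  0 < p.1 ∧ w.get p = w.get (predPos p)

/-- A normal embedding of `u` in `w`: a set of positions whose indexed subsequence is `u`
and which contains every position lying in the tail of some run of `w`. -/
def IsNormalEmbW {A : Type*} (u w : List A) (S : Finset (Fin w.length)) : Prop :=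
  subIdx w S = u ∧ ∀ p : Fin w.length, tailPosW w p → p ∈ S

/-- `NE(u,w)`: the number of normal embeddings of `u` in `w`. -/
noncomputable def wordNE {A : Type*} (u w : List A) : ℕ :=
  (Finset.univ.filter fun S : Finset (Fin w.length) => IsNormalEmbW u w S).card

/-- A set of positions of `w` is representative if within every run of `w` its positions
form a suffix of the run. -/
def ReprW {A : Type*} (w : List A) (S : Finset (Fin w.length)) : Prop :=
  ∀ p : Fin w.length, tailPosW w p → predPos p ∈ S → p ∈ S

/-- The poset `R*(u,w)` of representative proper subsets `S ⊊ {1,…,|w|}` of positions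
such that `u` is a subsequence of `w|_S`, ordered by inclusion. -/
abbrev RstarW {A : Type*} (u w : List A) :=
  {S : Finset (Fin w.length) // S ≠ Finset.univ ∧ ReprW w S ∧ u.Sublist (subIdx w S)}

/-!
The function `(u, w) ↦ (-1) ^ (|w| - |u|) * NE(u, w)` satisfies the defining recurrence of the
Möbius function of subword order, and a function satisfying that recurrence is unique (induction
on `|w|`). The recurrence amounts to `∑_{c ≤ w} (-1) ^ |c| * NE(u, c) = [u = w] * (-1) ^ |w|`,
proved by induction on `w = v a`. A normal embedding of `u` in `c a` either uses the last position,
and then `u = u' a` and it restricts to a normal embedding of `u'` in `c`, or avoids it, which is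
allowed only when `c` does not end in `a`, and then it is a normal embedding of `u` in `c`.
The subwords of `v a` are those of `v` not ending in `a` together with the words `c a`, `c ≤ v`;
in the sum, the embeddings in `c a` avoiding the last position cancel the first group because of
the extra sign, leaving `-∑_{c ≤ v} (-1) ^ |c| * NE(u', c)` if `u = u' a` and `0` otherwise.
-/

open Finset

-- The decidability binders let the lemma match the instances of `Fin n` used by `subIdx`, which
-- the file-wide `Classical.propDecidable` instance would otherwise shadow.
theorem Finset.sort_insert_of_forall_lt {α : Type*} [LinearOrder α] [DecidableEq α]
    [DecidableRel (α := α) (· ≤ ·)] {s : Finset α} {p : α}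
    (h : ∀ q ∈ s, q < p) : (insert p s).sort = s.sort ++ [p] := by
  have hp : p ∉ s := fun hp => lt_irrefl p (h p hp)
  refine List.Perm.eq_of_pairwise' (pairwise_sort _ _) ?_ ?_
  · exact List.pairwise_append.2 ⟨pairwise_sort _ _, List.pairwise_singleton _ _,
      fun q hq _ hp => List.mem_singleton.1 hp ▸ (h q ((mem_sort _).1 hq)).le⟩
  · rw [← Multiset.coe_eq_coe, sort_eq, insert_val_of_notMem hp, ← sort_eq s (· ≤ ·),
      Multiset.cons_coe, Multiset.coe_eq_coe]
    exact (List.perm_append_singleton _ _).symm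

theorem Finset.powerset_map {α β : Type*} (e : α ↪ β) (s : Finset α) :
    (s.map e).powerset = s.powerset.map (mapEmbedding e).toEmbedding := by
  ext t
  simp [subset_map_iff, eq_comm]

theorem Finset.card_filter_eq_add_of_univ_eq_insert {α β : Type*} [Fintype α] [Fintype β]
    [DecidableEq β] (P : Finset β → Prop) [DecidablePred P] (e : α ↪ β) (p : β)
    (hp : p ∉ univ.map e) (huniv : univ = insert p (univ.map e)) :
    #{S | P S} = #{T : Finset α | P (T.map e)} + #{T : Finset α | P (insert p (T.map e))} := by
  rw [card_filter, ← powerset_univ, huniv, sum_powerset_insert hp, powerset_map, sum_map,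
    sum_map, powerset_univ, card_filter, card_filter]
  rfl

section

variable {A : Type*}

section Concat

variable (c : List A) (a : A)

def initPos : Fin c.length ↪ Fin (c ++ [a]).length := Fin.castLEEmb (by simp)

def lastPos : Fin (c ++ [a]).length := ⟨c.length, by simp⟩

variable {c a}

@[simp]
theorem val_initPos (i : Fin c.length) : (initPos c a i : ℕ) = i := rfl

theorem initPos_lt_lastPos (i : Fin c.length) : initPos c a i < lastPos c a := i.2

theorem initPos_ne_lastPos (i : Fin c.length) : initPos c a i ≠ lastPos c a :=
  (initPos_lt_lastPos i).ne

theorem lastPos_notMem_map (T : Finset (Fin c.length)) : lastPos c a ∉ T.map (initPos c a) := by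
  simpa using fun i _ => initPos_ne_lastPos i

theorem univ_eq_insert_lastPos :
    (univ : Finset (Fin (c ++ [a]).length)) = insert (lastPos c a) (univ.map (initPos c a)) := by
  refine (eq_univ_of_forall fun q => ?_).symm
  by_cases hq : (q : ℕ) < c.length
  · exact mem_insert_of_mem (mem_map.2 ⟨⟨q, hq⟩, mem_univ _, rfl⟩)
  · have : (q : ℕ) < c.length + 1 := by simpa using q.2
    exact mem_insert.2 (Or.inl (Fin.ext (by simp [lastPos]; omega)))

theorem forall_pos_concat_iff {P : Fin (c ++ [a]).length → Prop} :
    (∀ q, P q) ↔ P (lastPos c a) ∧ ∀ i, P (initPos c a i) := by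
  refine ⟨fun h => ⟨h _, fun i => h _⟩, fun ⟨hl, hi⟩ q => ?_⟩
  have hq := univ_eq_insert_lastPos ▸ mem_univ q
  simp only [mem_insert, mem_map, mem_univ, true_and] at hq
  obtain rfl | ⟨i, rfl⟩ := hq
  exacts [hl, hi i]

theorem get_initPos (i : Fin c.length) : (c ++ [a]).get (initPos c a i) = c.get i := by
  simp [List.getElem_append_left i.2]

theorem get_lastPos : (c ++ [a]).get (lastPos c a) = a := by
  simp [lastPos]

theorem tailPosW_initPos_iff (i : Fin c.length) :
    tailPosW (c ++ [a]) (initPos c a i) ↔ tailPosW c i := by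
  have : predPos (initPos c a i) = initPos c a (predPos i) := rfl
  rw [tailPosW, tailPosW, this, get_initPos, get_initPos, val_initPos]

theorem tailPosW_lastPos_iff : tailPosW (c ++ [a]) (lastPos c a) ↔ c.getLast? = some a := by
  rcases List.eq_nil_or_concat c with rfl | ⟨c, b, rfl⟩
  · simp [tailPosW, lastPos]
  · simp [tailPosW, lastPos, predPos, eq_comm]

theorem subIdx_map_initPos (T : Finset (Fin c.length)) :
    subIdx (c ++ [a]) (T.map (initPos c a)) = subIdx c T := by
  have hmono : StrictMono (initPos c a) := fun _ _ h => h
  rw [subIdx, subIdx, ← (hmono.strictMonoOn T).map_finsetSort, List.map_map]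
  exact List.map_congr_left fun i _ => get_initPos i

theorem subIdx_insert_lastPos (T : Finset (Fin c.length)) :
    subIdx (c ++ [a]) (insert (lastPos c a) (T.map (initPos c a))) = subIdx c T ++ [a] := by
  rw [subIdx, sort_insert_of_forall_lt, List.map_append, ← subIdx, subIdx_map_initPos]
  · simp only [List.map_cons, List.map_nil, get_lastPos]
  · simpa using fun i _ => initPos_lt_lastPos i

end Concat

section NormalEmbeddings

variable {u c : List A} {a : A}

theorem subIdx_sublist (w : List A) (S : Finset (Fin w.length)) : (subIdx w S).Sublist w :=
  List.map_getElem_sublist (sortedLT_sort S).pairwise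

theorem wordNE_eq_zero_of_not_sublist (h : ¬ u.Sublist c) : wordNE u c = 0 := by
  rw [wordNE, card_eq_zero, filter_eq_empty_iff]
  rintro S - ⟨hS, -⟩
  exact h (hS ▸ subIdx_sublist c S)

theorem wordNE_self (u : List A) : wordNE u u = 1 := by
  rw [wordNE, card_eq_one]
  refine ⟨univ, eq_singleton_iff_unique_mem.2 ⟨?_, fun S hS => ?_⟩⟩
  · exact mem_filter.2 ⟨mem_univ _, by simp [subIdx, Fin.sort_univ], fun _ _ => mem_univ _⟩
  · have hcard : (subIdx u S).length = S.card := by simp [subIdx]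
    rw [(mem_filter.1 hS).2.1] at hcard
    exact eq_univ_of_card S (by simp [hcard])

theorem isNormalEmbW_map_initPos_iff (T : Finset (Fin c.length)) :
    IsNormalEmbW u (c ++ [a]) (T.map (initPos c a)) ↔
      IsNormalEmbW u c T ∧ c.getLast? ≠ some a := by
  simp only [IsNormalEmbW, subIdx_map_initPos, forall_pos_concat_iff (a := a), tailPosW_initPos_iff,
    tailPosW_lastPos_iff, mem_map', lastPos_notMem_map, imp_false]
  tauto

theorem isNormalEmbW_insert_lastPos_iff (T : Finset (Fin c.length)) :
    IsNormalEmbW u (c ++ [a]) (insert (lastPos c a) (T.map (initPos c a))) ↔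
      u.getLast? = some a ∧ IsNormalEmbW u.dropLast c T := by
  have hsub : subIdx c T ++ [a] = u ↔ u.getLast? = some a ∧ subIdx c T = u.dropLast := by
    constructor
    · rintro rfl
      simp
    · rintro ⟨hu, hT⟩
      obtain ⟨u, rfl⟩ := List.getLast?_eq_some_iff.1 hu
      simp_all
  simp only [IsNormalEmbW, subIdx_insert_lastPos, hsub, forall_pos_concat_iff (a := a),
    tailPosW_initPos_iff, mem_insert, mem_map', initPos_ne_lastPos, false_or, true_or,
    implies_true, true_and]
  tauto

theorem wordNE_concat (u c : List A) (a : A) :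
    wordNE u (c ++ [a]) =
      (if c.getLast? = some a then 0 else wordNE u c) +
        (if u.getLast? = some a then wordNE u.dropLast c else 0) := by
  rw [wordNE, card_filter_eq_add_of_univ_eq_insert _ (initPos c a) (lastPos c a)
    (lastPos_notMem_map _) univ_eq_insert_lastPos]
  simp only [isNormalEmbW_map_initPos_iff, isNormalEmbW_insert_lastPos_iff]
  split_ifs <;> simp [wordNE, *]

end NormalEmbeddings

theorem List.sum_sublists_toFinset_concat {M : Type*} [AddCommMonoid M] [DecidableEq A]
    (f : List A → M) (v : List A) (a : A) :
    ∑ c ∈ (v ++ [a]).sublists.toFinset, f c =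
      ∑ c ∈ v.sublists.toFinset with c.getLast? ≠ some a, f c +
        ∑ c ∈ v.sublists.toFinset, f (c ++ [a]) := by
  have hsplit : (v ++ [a]).sublists.toFinset =
      {c ∈ v.sublists.toFinset | c.getLast? ≠ some a} ∪
        v.sublists.toFinset.image (· ++ [a]) := by
    ext c
    simp only [mem_toFinset, mem_sublists, Finset.mem_union, Finset.mem_filter, Finset.mem_image,
      sublist_append_iff, sublist_singleton]
    constructor
    · rintro ⟨c, _, rfl, hc, rfl | rfl⟩
      · rw [append_nil]
        by_cases hl : c.getLast? = some a
        · obtain ⟨c', rfl⟩ := getLast?_eq_some_iff.1 hl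
          exact Or.inr ⟨c', (c'.sublist_append_left [a]).trans hc, rfl⟩
        · exact Or.inl ⟨hc, hl⟩
      · exact Or.inr ⟨c, hc, rfl⟩
    · rintro (⟨hc, -⟩ | ⟨c, hc, rfl⟩)
      exacts [⟨c, [], by simp, hc, Or.inl rfl⟩, ⟨c, [a], rfl, hc, Or.inr rfl⟩]
  rw [hsplit, sum_union, sum_image fun _ _ _ _ => append_cancel_right]
  refine Finset.disjoint_left.2 ?_
  simp only [Finset.mem_filter, Finset.mem_image]
  rintro _ ⟨-, hl⟩ ⟨c, -, rfl⟩
  exact hl getLast?_concat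

theorem sum_sublists_neg_one_pow_mul_wordNE (u w : List A) :
    ∑ c ∈ w.sublists.toFinset, (-1 : ℤ) ^ c.length * wordNE u c =
      if u = w then (-1) ^ w.length else 0 := by
  induction w using List.reverseRecOn generalizing u with
  | nil =>
    by_cases hu : u = []
    · simp [hu, wordNE_self]
    · simp [hu, wordNE_eq_zero_of_not_sublist]
  | append_singleton v a ih =>
    have hstep : ∀ c : List A, (-1 : ℤ) ^ (c ++ [a]).length * wordNE u (c ++ [a]) =
        -(if c.getLast? ≠ some a then (-1) ^ c.length * (wordNE u c : ℤ) else 0) +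
          -if u.getLast? = some a then (-1) ^ c.length * (wordNE u.dropLast c : ℤ) else 0 := by
      intro c
      simp only [wordNE_concat, List.length_append, List.length_singleton, ne_eq, ite_not]
      split_ifs <;> push_cast <;> ring
    rw [List.sum_sublists_toFinset_concat, sum_congr rfl fun c _ => hstep c, sum_add_distrib,
      sum_neg_distrib, sum_neg_distrib, ← sum_filter, add_neg_cancel_left]
    by_cases hu : u.getLast? = some a
    · obtain ⟨u, rfl⟩ := List.getLast?_eq_some_iff.1 hu
      simp only [hu, if_true, List.dropLast_concat, ih, List.append_cancel_right_eq,
        List.length_append, List.length_singleton, pow_succ]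
      split_ifs <;> simp
    · simp only [hu, if_false, sum_const_zero, neg_zero]
      rw [if_neg]
      rintro rfl
      exact hu List.getLast?_concat

structure IsSubwordMobius (mu : List A → List A → ℤ) : Prop where
  apply_self : ∀ u, mu u u = 1
  sum_eq_zero : ∀ u w, u.Sublist w → u ≠ w →
    ∑ c ∈ w.sublists.toFinset.filter (fun c => u.Sublist c), mu u c = 0

theorem IsSubwordMobius.eq {f g : List A → List A → ℤ} (hf : IsSubwordMobius f)
    (hg : IsSubwordMobius g) {u w : List A} (huw : u.Sublist w) : f u w = g u w := by
  obtain rfl | hne := eq_or_ne u w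
  · rw [hf.apply_self, hg.apply_self]
  have hw : w ∈ w.sublists.toFinset.filter (fun c => u.Sublist c) := by simpa using huw
  have hbelow : ∀ c ∈ (w.sublists.toFinset.filter (fun c => u.Sublist c)).erase w,
      f u c = g u c := fun c hc =>
    have hcw : c.Sublist w ∧ u.Sublist c := by simpa using (mem_erase.1 hc).2
    have : c.length < w.length :=
      hcw.1.length_le.lt_of_ne fun h => (mem_erase.1 hc).1 (hcw.1.eq_of_length h)
    hf.eq hg hcw.2
  have hsum := (hf.sum_eq_zero u w huw hne).trans (hg.sum_eq_zero u w huw hne).symm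
  rwa [← add_sum_erase _ _ hw, ← add_sum_erase _ _ hw, sum_congr rfl hbelow,
    add_left_inj] at hsum
termination_by w.length

theorem neg_one_pow_sub_eq_mul {R : Type*} [Monoid R] [HasDistribNeg R] {k m : ℕ} (h : k ≤ m) :
    (-1 : R) ^ (m - k) = (-1) ^ k * (-1) ^ m := by
  obtain ⟨d, rfl⟩ := Nat.exists_eq_add_of_le h
  rw [Nat.add_sub_cancel_left, pow_add, ← mul_assoc, ← pow_add, Even.neg_one_pow ⟨k, rfl⟩,
    one_mul]

theorem isSubwordMobius_neg_one_pow_mul_wordNE :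
    IsSubwordMobius fun u w : List A => (-1) ^ (w.length - u.length) * (wordNE u w : ℤ) where
  apply_self u := by simp [wordNE_self]
  sum_eq_zero u w _ hne := calc
    ∑ c ∈ w.sublists.toFinset.filter (fun c => u.Sublist c),
        (-1) ^ (c.length - u.length) * (wordNE u c : ℤ)
      = ∑ c ∈ w.sublists.toFinset.filter (fun c => u.Sublist c),
          (-1) ^ u.length * ((-1) ^ c.length * (wordNE u c : ℤ)) :=
        sum_congr rfl fun c hc => by
          rw [neg_one_pow_sub_eq_mul (mem_filter.1 hc).2.length_le, mul_assoc]
    _ = (-1) ^ u.length * ∑ c ∈ w.sublists.toFinset, (-1) ^ c.length * (wordNE u c : ℤ) := by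
        rw [← mul_sum, sum_filter_of_ne]
        intro c _ hc
        by_contra h
        simp [wordNE_eq_zero_of_not_sublist h] at hc
    _ = 0 := by rw [sum_sublists_neg_one_pow_mul_wordNE, if_neg hne, mul_zero]

end

/-- **Björner's theorem on subword order.** For words `u ≤ w` in subword
order, `μ(u,w) = (−1)^{|w|−|u|} · NE(u,w)`. The Möbius function `mu` of subword order is
characterised by its defining recurrence. -/
theorem stmt4 {A : Type*} (mu : List A → List A → ℤ)
    (hmu_self : ∀ u : List A, mu u u = 1)
    (hmu_rec : ∀ u w : List A, u.Sublist w → u ≠ w →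
      ∑ c ∈ w.sublists.toFinset.filter (fun c => u.Sublist c), mu u c = 0)
    (u w : List A) (huw : u.Sublist w) :
    mu u w = (-1) ^ (w.length - u.length) * (wordNE u w : ℤ) :=
  IsSubwordMobius.eq ⟨hmu_self, hmu_rec⟩ isSubwordMobius_neg_one_pow_mul_wordNE huw
end

section
/- Let σ < π be permutations in the classical permutation pattern order, with σ of length m and π of length n, and suppose n − m ≥ 3. Then the open interval (σ,π) = {λ : σ < λ < π} is disconnected if and only if [σ,π] is strongly zero split. -/
attribute [local instance] Classical.propDecidable

/-- Classical pattern containment for (reduced) permutations. -/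
def PermLE {m n : ℕ} (σ : Equiv.Perm (Fin m)) (π : Equiv.Perm (Fin n)) : Prop :=
  ∃ f : Fin m → Fin n, StrictMono f ∧ ∀ i j : Fin m, σ i < σ j ↔ π (f i) < π (f j)

/-- Strict classical pattern containment. -/
def PermLT {m n : ℕ} (σ : Equiv.Perm (Fin m)) (π : Equiv.Perm (Fin n)) : Prop :=
  PermLE σ π ∧ ¬ PermLE π σ

/-- `red π S` is the permutation of length `S.card` order-isomorphic to `π`
restricted to the set of positions `S`. -/
noncomputable def red {n : ℕ} (π : Equiv.Perm (Fin n)) (S : Finset (Fin n)) :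
    Equiv.Perm (Fin S.card) := by
  classical
  have hcard : (S.image fun x => π x).card = S.card :=
    Finset.card_image_of_injective _ π.injective
  refine Equiv.ofBijective (fun i =>
    ((S.image fun x => π x).orderIsoOfFin hcard).symm
      ⟨π (S.orderIsoOfFin rfl i), Finset.mem_image_of_mem _ (S.orderIsoOfFin rfl i).2⟩)
    (Finite.injective_iff_bijective.mp ?_)
  intro i j hij
  have h2 := congrArg (fun z => ((((S.image fun x => π x).orderIsoOfFin hcard) z : Fin n)))
    hij
  simp only [OrderIso.apply_symm_apply] at h2
  have h4 := π.injective h2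
  have h5 : (S.orderIsoOfFin rfl) i = (S.orderIsoOfFin rfl) j := Subtype.ext h4
  exact (S.orderIsoOfFin rfl).injective h5

/-- `S` is an embedding (occurrence set) of `σ` in `π`, i.e. `red(π|_S) = σ`. -/
def IsEmb {n m : ℕ} (π : Equiv.Perm (Fin n)) (S : Finset (Fin n))
    (σ : Equiv.Perm (Fin m)) : Prop :=
  ∃ h : S.card = m, ∀ i : Fin S.card, (red π S i : ℕ) = (σ (Fin.cast h i) : ℕ)

/-- `E(σ,π)`: the number of embeddings of `σ` in `π`. -/
noncomputable def permE {m n : ℕ} (σ : Equiv.Perm (Fin m)) (π : Equiv.Perm (Fin n)) : ℕ :=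
  (Finset.univ.filter fun S : Finset (Fin n) => IsEmb π S σ).card

/-- The poset `A*(λ,π)` of proper position sets `S ⊊ Fin n` with `λ ≤ red(π|_S)`,
ordered by inclusion. -/
abbrev AstarP {n k : ℕ} (π : Equiv.Perm (Fin n)) (lam : Equiv.Perm (Fin k)) :=
  {S : Finset (Fin n) // S ≠ Finset.univ ∧ PermLE lam (red π S)}

/-- `p` lies in the tail of an adjacency of `π`: `p` is not the first position and the
values of `π` at `p−1` and `p` differ by exactly one (consecutive positions in a maximal
block on which the values increase by exactly 1 at each step or decrease by exactly 1 at
each step). -/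
def tailPos {n : ℕ} (π : Equiv.Perm (Fin n)) (p : Fin n) : Prop :=
  0 < p.1 ∧ ((π p : ℕ) = (π (predPos p) : ℕ) + 1 ∨ (π (predPos p) : ℕ) = (π p : ℕ) + 1)

/-- A normal embedding: an embedding containing every position in the tail of an
adjacency of `π`. -/
def IsNormalEmb {n m : ℕ} (π : Equiv.Perm (Fin n)) (S : Finset (Fin n))
    (σ : Equiv.Perm (Fin m)) : Prop :=
  IsEmb π S σ ∧ ∀ p : Fin n, tailPos π p → p ∈ S

/-- `NE(σ,π)`: the number of normal embeddings of `σ` in `π`. -/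
noncomputable def permNE {m n : ℕ} (σ : Equiv.Perm (Fin m)) (π : Equiv.Perm (Fin n)) : ℕ :=
  (Finset.univ.filter fun S : Finset (Fin n) => IsNormalEmb π S σ).card

/-- A set of positions is representative if within every adjacency of `π` its positions
form a suffix of the adjacency. -/
def ReprP {n : ℕ} (π : Equiv.Perm (Fin n)) (S : Finset (Fin n)) : Prop :=
  ∀ p : Fin n, tailPos π p → predPos p ∈ S → p ∈ S

/-- The poset `R*(λ,π)` of representative proper position sets `S ⊊ Fin n` with
`λ ≤ red(π|_S)`, ordered by inclusion. -/
abbrev RstarP {n k : ℕ} (π : Equiv.Perm (Fin n)) (lam : Equiv.Perm (Fin k)) :=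
  {S : Finset (Fin n) // S ≠ Finset.univ ∧ ReprP π S ∧ PermLE lam (red π S)}

/-- The type of all (reduced) permutations of arbitrary lengths. -/
def AllPerm : Type := Σ k : ℕ, Equiv.Perm (Fin k)

/-- Pattern containment on `AllPerm`. -/
def APle (a b : AllPerm) : Prop := PermLE a.2 b.2

/-- Strict pattern containment on `AllPerm`. -/
def APlt (a b : AllPerm) : Prop := APle a b ∧ ¬ APle b a

/-- A subset `s` of a set with a binary "less or equal" relation `r` is disconnected if it
splits into two nonempty parts such that every pair of elements from separate parts is
incomparable. -/
def DisconnRel {α : Type*} (r : α → α → Prop) (s : Set α) : Prop :=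
  ∃ A B : Set α, A.Nonempty ∧ B.Nonempty ∧ A ∪ B = s ∧ A ∩ B = ∅ ∧
    ∀ a ∈ A, ∀ b ∈ B, ¬ r a b ∧ ¬ r b a

/-- The set of embeddings of `σ` in `π`. -/
def EmbSet {m n : ℕ} (σ : Equiv.Perm (Fin m)) (π : Equiv.Perm (Fin n)) :
    Set (Finset (Fin n)) := {S | IsEmb π S σ}

/-- The union of the zero sets (complements) of a collection of embeddings. -/
def ZSet {n : ℕ} (E : Set (Finset (Fin n))) : Set (Fin n) :=
  ⋃ S ∈ E, (↑(Sᶜ) : Set (Fin n))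

/-- `E₁, E₂` is a zero split partition of the embeddings of `σ` in `π`. -/
def ZeroSplitPartition {m n : ℕ} (σ : Equiv.Perm (Fin m)) (π : Equiv.Perm (Fin n))
    (E₁ E₂ : Set (Finset (Fin n))) : Prop :=
  E₁.Nonempty ∧ E₂.Nonempty ∧ E₁ ∪ E₂ = EmbSet σ π ∧ E₁ ∩ E₂ = ∅ ∧
    ZSet E₁ ∩ ZSet E₂ = ∅

/-- The interval `[σ,π]` is zero split. -/
def ZeroSplit {m n : ℕ} (σ : Equiv.Perm (Fin m)) (π : Equiv.Perm (Fin n)) : Prop :=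
  ∃ E₁ E₂ : Set (Finset (Fin n)), ZeroSplitPartition σ π E₁ E₂

/-- The strong condition on a zero split partition: no pair of zero positions can be
filled so that the two resulting position sets are embeddings of the same element. -/
def StrongCondition {n : ℕ} (π : Equiv.Perm (Fin n)) (E₁ E₂ : Set (Finset (Fin n))) : Prop :=
  ∀ S₁ ∈ E₁, ∀ S₂ ∈ E₂,
    ¬ ∃ z₁ ∈ (↑(S₁ᶜ) : Set (Fin n)), ∃ z₂ ∈ (↑(S₂ᶜ) : Set (Fin n)),
      ∃ (k : ℕ) (τ : Equiv.Perm (Fin k)),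
        IsEmb π (insert z₁ S₁) τ ∧ IsEmb π (insert z₂ S₂) τ

/-- The interval `[σ,π]` is strongly zero split. -/
def StronglyZeroSplit {m n : ℕ} (σ : Equiv.Perm (Fin m)) (π : Equiv.Perm (Fin n)) : Prop :=
  ∃ E₁ E₂ : Set (Finset (Fin n)),
    ZeroSplitPartition σ π E₁ E₂ ∧ StrongCondition π E₁ E₂

/-!
Every element of the open interval `(σ, π)` is the pattern of `π` at a proper set of positions
containing an embedding of `σ`. Given a separation `A` of the interval, whether the
`(m + 1)`-element pattern `π|_{S ∪ {z}}` of an embedding `S` of `σ` lies in `A` depends neither on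
`z` (both choices lie below `π|_{S ∪ {z, z'}}`, of length `m + 2 < n`) nor, for a fixed zero `z`,
on `S` (everything lies below `π|_{[n] ∖ {z}}`). Sorting embeddings accordingly gives a strongly
zero split partition. Conversely, for a strongly zero split partition `E₁, E₂`, all embeddings of
`σ` inside one proper position set share a zero outside it and hence lie in the same part, and
the strong condition makes that part depend only on the pattern, not on the position set; so the
elements lying above an embedding in `E₁` are a union of components.
-/

open Finset

variable {m n k : ℕ}

theorem perm_eq_of_lt_iff {p q : Equiv.Perm (Fin k)} (h : ∀ i j, p i < p j ↔ q i < q j) :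
    p = q := by
  have hmono : StrictMono (q ∘ p.symm) := fun a b hab => (h _ _).1 (by simpa using hab)
  exact Equiv.ext fun i => by simpa using (congrFun hmono.eq_id (p i)).symm

theorem red_lt_red_iff (π : Equiv.Perm (Fin n)) (S : Finset (Fin n)) (i j : Fin S.card) :
    red π S i < red π S j ↔ π (S.orderEmbOfFin rfl i) < π (S.orderEmbOfFin rfl j) := by
  simp only [red, Equiv.ofBijective_apply, OrderIso.lt_iff_lt, Subtype.mk_lt_mk,
    coe_orderIsoOfFin_apply]

theorem exists_notMem_of_card_lt {S : Finset (Fin n)} (h : S.card < n) : ∃ z, z ∉ S := by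
  obtain ⟨z, -, hz⟩ := exists_mem_notMem_of_card_lt_card (t := univ) (s := S)
    (by rwa [card_univ, Fintype.card_fin])
  exact ⟨z, hz⟩

theorem IsEmb.card_eq {π : Equiv.Perm (Fin n)} {S : Finset (Fin n)} {τ : Equiv.Perm (Fin k)}
    (h : IsEmb π S τ) : S.card = k :=
  h.1

noncomputable def patternAt (π : Equiv.Perm (Fin n)) (S : Finset (Fin n)) : AllPerm :=
  ⟨S.card, red π S⟩

theorem isEmb_iff_patternAt_eq {π : Equiv.Perm (Fin n)} {S : Finset (Fin n)}
    {τ : Equiv.Perm (Fin k)} : IsEmb π S τ ↔ patternAt π S = ⟨k, τ⟩ := by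
  constructor
  · rintro ⟨rfl, hv⟩
    exact congrArg (Sigma.mk S.card) (Equiv.ext fun i => Fin.ext (hv i))
  · intro h
    obtain ⟨rfl, h⟩ := Sigma.mk.inj_iff.mp h
    obtain rfl := eq_of_heq h
    exact ⟨rfl, fun _ => rfl⟩

theorem patternAt_eq_of_orderEmbedding {π : Equiv.Perm (Fin n)} {S : Finset (Fin n)}
    {ρ : Equiv.Perm (Fin k)} (g : Fin k ↪o Fin n) (hgS : ∀ i, g i ∈ S) (hS : S.card = k)
    (hρ : ∀ i j, ρ i < ρ j ↔ π (g i) < π (g j)) : patternAt π S = ⟨k, ρ⟩ := by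
  subst hS
  obtain rfl := orderEmbOfFin_unique' rfl hgS
  exact congrArg (Sigma.mk S.card)
    (perm_eq_of_lt_iff fun i j => (red_lt_red_iff π S i j).trans (hρ i j).symm)

theorem patternAt_map_orderEmbOfFin (π : Equiv.Perm (Fin n)) (T : Finset (Fin n))
    (Q : Finset (Fin T.card)) :
    patternAt π (Q.map (T.orderEmbOfFin rfl).toEmbedding) = patternAt (red π T) Q :=
  patternAt_eq_of_orderEmbedding ((Q.orderEmbOfFin rfl).trans (T.orderEmbOfFin rfl))
    (fun i => mem_map_of_mem _ (Q.orderEmbOfFin_mem rfl i)) (card_map _)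
    (fun i j => by rw [red_lt_red_iff, red_lt_red_iff]; rfl)

theorem exists_orderEmbedding_of_patternAt_eq {π : Equiv.Perm (Fin n)} {T : Finset (Fin n)}
    {ρ : Equiv.Perm (Fin k)} (h : patternAt π T = ⟨k, ρ⟩) :
    ∃ g : Fin k ↪o Fin n, (∀ i, g i ∈ T) ∧
      ∀ Q, patternAt π (Q.map g.toEmbedding) = patternAt ρ Q := by
  obtain ⟨rfl, h⟩ := Sigma.mk.inj_iff.mp h
  obtain rfl := eq_of_heq h
  exact ⟨T.orderEmbOfFin rfl, T.orderEmbOfFin_mem rfl, patternAt_map_orderEmbOfFin π T⟩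

theorem APle.card_le {x y : AllPerm} (h : APle x y) : x.1 ≤ y.1 := by
  obtain ⟨f, hf, -⟩ := h
  simpa using Fintype.card_le_of_injective f hf.injective

theorem aPlt_iff {x y : AllPerm} : APlt x y ↔ APle x y ∧ x.1 < y.1 := by
  obtain ⟨k, p⟩ := x
  obtain ⟨l, q⟩ := y
  refine ⟨fun ⟨hle, hnot⟩ => ⟨hle, (APle.card_le hle).lt_of_ne fun hkl => hnot ?_⟩,
    fun ⟨hle, hlt⟩ => ⟨hle, fun hge => (APle.card_le hge).not_gt hlt⟩⟩
  obtain rfl : k = l := hkl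
  obtain ⟨f, hf, hpq⟩ := hle
  obtain rfl : f = id := hf.eq_id
  exact ⟨id, strictMono_id, fun i j => (hpq i j).symm⟩

theorem patternAt_le_self (π : Equiv.Perm (Fin n)) (S : Finset (Fin n)) :
    APle (patternAt π S) ⟨n, π⟩ :=
  ⟨S.orderEmbOfFin rfl, (S.orderEmbOfFin rfl).strictMono, red_lt_red_iff π S⟩

theorem exists_patternAt_eq_of_le {π : Equiv.Perm (Fin n)} {x : AllPerm}
    (h : APle x ⟨n, π⟩) : ∃ S, patternAt π S = x := by
  obtain ⟨f, hf, hfπ⟩ := h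
  exact ⟨univ.map (OrderEmbedding.ofStrictMono f hf).toEmbedding,
    patternAt_eq_of_orderEmbedding _ (fun i => mem_map_of_mem _ (mem_univ i))
      (by rw [card_map, card_univ, Fintype.card_fin]) hfπ⟩

theorem patternAt_le_patternAt (π : Equiv.Perm (Fin n)) {S T : Finset (Fin n)} (h : S ⊆ T) :
    APle (patternAt π S) (patternAt π T) := by
  rw [← map_orderEmbOfFin_univ T rfl, subset_map_iff] at h
  obtain ⟨Q, -, rfl⟩ := h
  rw [patternAt_map_orderEmbOfFin]
  exact patternAt_le_self _ Q

theorem le_patternAt_iff {π : Equiv.Perm (Fin n)} {T : Finset (Fin n)} {x : AllPerm} :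
    APle x (patternAt π T) ↔ ∃ S ⊆ T, patternAt π S = x := by
  refine ⟨fun h => ?_, fun ⟨S, hST, hS⟩ => hS ▸ patternAt_le_patternAt π hST⟩
  obtain ⟨Q, rfl⟩ := exists_patternAt_eq_of_le (π := red π T) h
  refine ⟨Q.map (T.orderEmbOfFin rfl).toEmbedding, ?_, patternAt_map_orderEmbOfFin π T Q⟩
  exact fun _ hx => by
    obtain ⟨i, -, rfl⟩ := mem_map.1 hx
    exact T.orderEmbOfFin_mem rfl i

def ComparabilityClosed {α : Type*} (r : α → α → Prop) (s A : Set α) : Prop :=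
  ∀ a ∈ s, ∀ b ∈ s, r a b → (a ∈ A ↔ b ∈ A)

theorem disconnRel_iff {α : Type*} {r : α → α → Prop} {s : Set α} :
    DisconnRel r s ↔
      ∃ A ⊆ s, A.Nonempty ∧ (s \ A).Nonempty ∧ ComparabilityClosed r s A := by
  constructor
  · rintro ⟨A, B, hA, ⟨b, hb⟩, rfl, hAB, hinc⟩
    refine ⟨A, Set.subset_union_left, hA,
      ⟨b, Or.inr hb, fun hbA => (Set.eq_empty_iff_forall_notMem.1 hAB) b ⟨hbA, hb⟩⟩,
      fun a ha b hb hab => ⟨fun haA => ?_, fun hbA => ?_⟩⟩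
    · exact hb.resolve_right fun hbB => (hinc a haA b hbB).1 hab
    · exact ha.resolve_right fun haB => (hinc b hbA a haB).2 hab
  · rintro ⟨A, hAs, hA, hsA, hclosed⟩
    refine ⟨A, s \ A, hA, hsA, Set.union_sdiff_cancel hAs, Set.inter_sdiff_self A s,
      fun a ha b hb => ⟨fun hab => hb.2 ((hclosed a (hAs ha) b hb.1 hab).1 ha),
        fun hba => hb.2 ((hclosed b hb.1 a (hAs ha) hba).2 ha)⟩⟩

theorem mem_ZSet {E : Set (Finset (Fin n))} {z : Fin n} : z ∈ ZSet E ↔ ∃ S ∈ E, z ∉ S := by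
  simp [ZSet]

def openIvl (σ : Equiv.Perm (Fin m)) (π : Equiv.Perm (Fin n)) : Set AllPerm :=
  {x | APlt ⟨m, σ⟩ x ∧ APlt x ⟨n, π⟩}

section openIvl

variable {σ : Equiv.Perm (Fin m)} {π : Equiv.Perm (Fin n)}

theorem patternAt_mem_openIvl {S T : Finset (Fin n)} (hST : S ⊂ T) (hS : IsEmb π S σ)
    (hT : T.card < n) : patternAt π T ∈ openIvl σ π := by
  refine ⟨aPlt_iff.2 ⟨?_, hS.card_eq ▸ card_lt_card hST⟩,
    aPlt_iff.2 ⟨patternAt_le_self π T, hT⟩⟩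
  exact isEmb_iff_patternAt_eq.1 hS ▸ patternAt_le_patternAt π hST.subset

theorem exists_patternAt_eq_of_mem_openIvl {x : AllPerm} (hx : x ∈ openIvl σ π) :
    ∃ T, patternAt π T = x :=
  exists_patternAt_eq_of_le hx.2.1

theorem card_lt_of_patternAt_mem_openIvl {T : Finset (Fin n)}
    (hT : patternAt π T ∈ openIvl σ π) : T.card < n :=
  (aPlt_iff.1 hT.2).2

theorem exists_ssubset_isEmb_of_patternAt_mem_openIvl {T : Finset (Fin n)}
    (hT : patternAt π T ∈ openIvl σ π) : ∃ S ⊂ T, IsEmb π S σ := by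
  obtain ⟨hle, hlt⟩ := aPlt_iff.1 hT.1
  obtain ⟨S, hST, hS⟩ := le_patternAt_iff.1 hle
  have hSm : S.card = m := congrArg Sigma.fst hS
  change m < T.card at hlt
  exact ⟨S, hST.ssubset_of_ne (by rintro rfl; omega), isEmb_iff_patternAt_eq.2 hS⟩

theorem exists_patternAt_insert_mem_openIvl (hmn : m + 2 ≤ n) {S : Finset (Fin n)}
    (hS : IsEmb π S σ) : ∃ z ∉ S, patternAt π (insert z S) ∈ openIvl σ π := by
  obtain ⟨z, hz⟩ := exists_notMem_of_card_lt (hS.card_eq.trans_lt (by omega))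
  refine ⟨z, hz, patternAt_mem_openIvl (ssubset_insert hz) hS ?_⟩
  rw [card_insert_of_notMem hz, hS.card_eq]
  omega

section ComparabilityClosed

variable {A : Set AllPerm}

theorem patternAt_mem_iff_of_subset (hA : ComparabilityClosed APle (openIvl σ π) A)
    {S U V : Finset (Fin n)} (hS : IsEmb π S σ) (hSU : S ⊂ U) (hUV : U ⊆ V) (hV : V.card < n) :
    patternAt π U ∈ A ↔ patternAt π V ∈ A :=
  hA _ (patternAt_mem_openIvl hSU hS ((card_le_card hUV).trans_lt hV)) _
    (patternAt_mem_openIvl (hSU.trans_subset hUV) hS hV) (patternAt_le_patternAt π hUV)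

theorem patternAt_mem_iff_insert_mem (hA : ComparabilityClosed APle (openIvl σ π) A)
    (hmn : m + 3 ≤ n) {S T : Finset (Fin n)} (hS : IsEmb π S σ) (hST : S ⊂ T) (hT : T.card < n)
    {z : Fin n} (hz : z ∉ S) :
    patternAt π T ∈ A ↔ patternAt π (insert z S) ∈ A := by
  obtain ⟨w, hwT, hwS⟩ := exists_of_ssubset hST
  have hcard : (insert z (insert w S)).card < n :=
    (card_insert_le _ _).trans_lt (by have := card_insert_le w S; have := hS.card_eq; omega)
  calc patternAt π T ∈ A ↔ patternAt π (insert w S) ∈ A :=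
        (patternAt_mem_iff_of_subset hA hS (ssubset_insert hwS) (insert_subset hwT hST.subset)
          hT).symm
    _ ↔ patternAt π (insert z (insert w S)) ∈ A :=
        patternAt_mem_iff_of_subset hA hS (ssubset_insert hwS) (subset_insert _ _) hcard
    _ ↔ patternAt π (insert z S) ∈ A :=
        (patternAt_mem_iff_of_subset hA hS (ssubset_insert hz)
          (insert_subset_insert z (subset_insert w S)) hcard).symm

theorem patternAt_insert_mem_iff (hA : ComparabilityClosed APle (openIvl σ π) A)
    (hmn : m + 3 ≤ n) {S₁ S₂ : Finset (Fin n)} (hS₁ : IsEmb π S₁ σ) (hS₂ : IsEmb π S₂ σ)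
    {z : Fin n} (hz₁ : z ∉ S₁) (hz₂ : z ∉ S₂) :
    patternAt π (insert z S₁) ∈ A ↔ patternAt π (insert z S₂) ∈ A := by
  have hcard : ({z}ᶜ : Finset (Fin n)).card = n - 1 := by
    rw [card_compl, card_singleton, Fintype.card_fin]
  have hsub : ∀ {S}, IsEmb π S σ → z ∉ S → S ⊂ {z}ᶜ := fun {S} hS hz =>
    (subset_compl_singleton.2 hz).ssubset_of_ne fun h => by
      have := hS.card_eq
      rw [h, hcard] at this
      omega
  exact (patternAt_mem_iff_insert_mem hA hmn hS₁ (hsub hS₁ hz₁) (by omega) hz₁).symm.trans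
    (patternAt_mem_iff_insert_mem hA hmn hS₂ (hsub hS₂ hz₂) (by omega) hz₂)

theorem stronglyZeroSplit_of_comparabilityClosed (hmn : m + 3 ≤ n)
    (hA : ComparabilityClosed APle (openIvl σ π) A) (hAI : A ⊆ openIvl σ π)
    (hA₁ : A.Nonempty) (hA₂ : (openIvl σ π \ A).Nonempty) : StronglyZeroSplit σ π := by
  set E : Set (Finset (Fin n)) := {S | ∀ z ∉ S, patternAt π (insert z S) ∈ A}
  have hE : ∀ {S z}, IsEmb π S σ → z ∉ S → (S ∈ E ↔ patternAt π (insert z S) ∈ A) :=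
    fun {S z} hS hz => ⟨fun h => h z hz, fun h z' hz' =>
      (patternAt_mem_iff_insert_mem hA hmn hS (ssubset_insert hz)
        (card_lt_of_patternAt_mem_openIvl (hAI h)) hz').1 h⟩
  have hpart : ∀ x ∈ openIvl σ π, ∃ S, IsEmb π S σ ∧ (S ∈ E ↔ x ∈ A) := by
    intro x hx
    obtain ⟨T, rfl⟩ := exists_patternAt_eq_of_mem_openIvl hx
    obtain ⟨S, hST, hS⟩ := exists_ssubset_isEmb_of_patternAt_mem_openIvl hx
    obtain ⟨z, -, hz⟩ := exists_of_ssubset hST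
    exact ⟨S, hS, (hE hS hz).trans (patternAt_mem_iff_insert_mem hA hmn hS hST
      (card_lt_of_patternAt_mem_openIvl hx) hz).symm⟩
  refine ⟨EmbSet σ π ∩ E, EmbSet σ π \ E, ⟨?_, ?_, Set.inter_union_sdiff _ _, ?_, ?_⟩, ?_⟩
  · obtain ⟨x, hx⟩ := hA₁
    obtain ⟨S, hS, hSx⟩ := hpart x (hAI hx)
    exact ⟨S, hS, hSx.2 hx⟩
  · obtain ⟨x, hxI, hx⟩ := hA₂
    obtain ⟨S, hS, hSx⟩ := hpart x hxI
    exact ⟨S, hS, fun h => hx (hSx.1 h)⟩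
  · exact Set.eq_empty_of_forall_notMem fun S ⟨⟨_, hSE⟩, _, hSE'⟩ => hSE' hSE
  · refine Set.eq_empty_of_forall_notMem fun z ⟨hz₁, hz₂⟩ => ?_
    obtain ⟨S₁, ⟨hS₁, h₁⟩, hzS₁⟩ := mem_ZSet.1 hz₁
    obtain ⟨S₂, ⟨hS₂, h₂⟩, hzS₂⟩ := mem_ZSet.1 hz₂
    exact h₂ ((hE hS₂ hzS₂).2 ((patternAt_insert_mem_iff hA hmn hS₁ hS₂ hzS₁ hzS₂).1
      ((hE hS₁ hzS₁).1 h₁)))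
  · rintro S₁ ⟨hS₁, h₁⟩ S₂ ⟨hS₂, h₂⟩ ⟨z₁, hz₁, z₂, hz₂, k, τ, he₁, he₂⟩
    rw [mem_coe, mem_compl] at hz₁ hz₂
    rw [isEmb_iff_patternAt_eq] at he₁ he₂
    exact h₂ ((hE hS₂ hz₂).2 (he₂ ▸ he₁ ▸ (hE hS₁ hz₁).1 h₁))

end ComparabilityClosed

section ZeroSplitPartition

variable {E₁ E₂ : Set (Finset (Fin n))}

theorem ZeroSplitPartition.isEmb_of_mem_left (hE : ZeroSplitPartition σ π E₁ E₂)
    {S : Finset (Fin n)} (hS : S ∈ E₁) : IsEmb π S σ :=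
  (Set.ext_iff.1 hE.2.2.1 S).1 (Or.inl hS)

theorem ZeroSplitPartition.mem_right_iff (hE : ZeroSplitPartition σ π E₁ E₂)
    {S : Finset (Fin n)} (hS : IsEmb π S σ) : S ∈ E₂ ↔ S ∉ E₁ := by
  have hS' : S ∈ E₁ ∪ E₂ := hE.2.2.1 ▸ hS
  exact ⟨fun h₂ h₁ => (Set.eq_empty_iff_forall_notMem.1 hE.2.2.2.1) S ⟨h₁, h₂⟩,
    hS'.resolve_left⟩

theorem ZeroSplitPartition.mem_left_iff_of_subset (hE : ZeroSplitPartition σ π E₁ E₂)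
    {T S S' : Finset (Fin n)} (hT : T.card < n) (hST : S ⊆ T) (hS'T : S' ⊆ T)
    (hS : IsEmb π S σ) (hS' : IsEmb π S' σ) : S ∈ E₁ ↔ S' ∈ E₁ := by
  obtain ⟨w, hw⟩ := exists_notMem_of_card_lt hT
  have key : ∀ {S S'}, S ⊆ T → S' ⊆ T → IsEmb π S' σ → S ∈ E₁ → S' ∈ E₁ :=
    fun {S S'} hST hS'T hS' h₁ => by
      by_contra h₂
      rw [← hE.mem_right_iff hS'] at h₂
      exact (Set.eq_empty_iff_forall_notMem.1 hE.2.2.2.2) w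
        ⟨mem_ZSet.2 ⟨S, h₁, fun h => hw (hST h)⟩, mem_ZSet.2 ⟨S', h₂, fun h => hw (hS'T h)⟩⟩
  exact ⟨key hST hS'T hS', key hS'T hST hS⟩

theorem StrongCondition.patternAt_insert_ne (hs : StrongCondition π E₁ E₂)
    {S₁ S₂ : Finset (Fin n)} (h₁ : S₁ ∈ E₁) (h₂ : S₂ ∈ E₂) {z₁ z₂ : Fin n} (hz₁ : z₁ ∉ S₁)
    (hz₂ : z₂ ∉ S₂) : patternAt π (insert z₁ S₁) ≠ patternAt π (insert z₂ S₂) := fun h =>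
  hs S₁ h₁ S₂ h₂ ⟨z₁, by simpa using hz₁, z₂, by simpa using hz₂, _, _,
    isEmb_iff_patternAt_eq.2 rfl, isEmb_iff_patternAt_eq.2 h.symm⟩

theorem mem_left_iff_of_patternAt_eq (hE : ZeroSplitPartition σ π E₁ E₂)
    (hs : StrongCondition π E₁ E₂) {T₁ T₂ S₁ S₂ : Finset (Fin n)}
    (hT₁ : patternAt π T₁ ∈ openIvl σ π) (hT : patternAt π T₁ = patternAt π T₂)
    (hS₁T : S₁ ⊆ T₁) (hS₂T : S₂ ⊆ T₂) (hS₁ : IsEmb π S₁ σ) (hS₂ : IsEmb π S₂ σ) :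
    S₁ ∈ E₁ ↔ S₂ ∈ E₁ := by
  obtain ⟨⟨hσ, hmk⟩, -, hkn⟩ := And.imp aPlt_iff.1 aPlt_iff.1 hT₁
  obtain ⟨P, hP⟩ := exists_patternAt_eq_of_le hσ
  obtain ⟨q, hq⟩ := exists_notMem_of_card_lt ((congrArg Sigma.fst hP).trans_lt hmk)
  -- `P ∪ {q}` (an occurrence of `σ` plus one point in the common pattern) is carried into both
  -- `T₁` and `T₂`; the strong condition forbids the two copies of `P` to lie in different parts.
  have transfer : ∀ {T S : Finset (Fin n)}, patternAt π T = patternAt π T₁ → S ⊆ T →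
      IsEmb π S σ → ∃ S' : Finset (Fin n), ∃ z ∉ S', IsEmb π S' σ ∧ (S ∈ E₁ ↔ S' ∈ E₁) ∧
        patternAt π (insert z S') = patternAt (red π T₁) (insert q P) := by
    intro T S hTT₁ hST hS
    obtain ⟨g, hgT, hg⟩ := exists_orderEmbedding_of_patternAt_eq hTT₁
    have hPg : IsEmb π (P.map g.toEmbedding) σ := by rw [isEmb_iff_patternAt_eq, hg, hP]
    refine ⟨P.map g.toEmbedding, g q, by simpa using hq, hPg, ?_, by rw [← hg, map_insert]; rfl⟩
    refine hE.mem_left_iff_of_subset ((congrArg Sigma.fst hTT₁).trans_lt hkn) hST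
      (fun x hx => ?_) hS hPg
    obtain ⟨i, -, rfl⟩ := mem_map.1 hx
    exact hgT i
  obtain ⟨P₁, z₁, hz₁, hP₁, hSP₁, he₁⟩ := transfer rfl hS₁T hS₁
  obtain ⟨P₂, z₂, hz₂, hP₂, hSP₂, he₂⟩ := transfer hT.symm hS₂T hS₂
  rw [hSP₁, hSP₂]
  constructor
  · intro h₁
    by_contra h₂
    exact hs.patternAt_insert_ne h₁ ((hE.mem_right_iff hP₂).2 h₂) hz₁ hz₂ (he₁.trans he₂.symm)
  · intro h₂
    by_contra h₁
    exact hs.patternAt_insert_ne h₂ ((hE.mem_right_iff hP₁).2 h₁) hz₂ hz₁ (he₂.trans he₁.symm)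

def openIvlAbove (σ : Equiv.Perm (Fin m)) (π : Equiv.Perm (Fin n))
    (E : Set (Finset (Fin n))) : Set AllPerm :=
  {x ∈ openIvl σ π | ∃ T, patternAt π T = x ∧ ∃ S ∈ E, S ⊆ T}

theorem patternAt_mem_openIvlAbove_iff (hE : ZeroSplitPartition σ π E₁ E₂)
    (hs : StrongCondition π E₁ E₂) {T S : Finset (Fin n)} (hT : patternAt π T ∈ openIvl σ π)
    (hST : S ⊆ T) (hS : IsEmb π S σ) : patternAt π T ∈ openIvlAbove σ π E₁ ↔ S ∈ E₁ := by
  refine ⟨fun ⟨_, T', hT', S', hS'E, hS'T'⟩ => ?_, fun h => ⟨hT, T, rfl, S, h, hST⟩⟩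
  exact (mem_left_iff_of_patternAt_eq hE hs (hT' ▸ hT) hT' hS'T' hST
    (hE.isEmb_of_mem_left hS'E) hS).1 hS'E

theorem comparabilityClosed_openIvlAbove (hE : ZeroSplitPartition σ π E₁ E₂)
    (hs : StrongCondition π E₁ E₂) :
    ComparabilityClosed APle (openIvl σ π) (openIvlAbove σ π E₁) := by
  intro a ha b hb hab
  obtain ⟨T, rfl⟩ := exists_patternAt_eq_of_mem_openIvl hb
  obtain ⟨U, hUT, rfl⟩ := le_patternAt_iff.1 hab
  obtain ⟨S, hSU, hS⟩ := exists_ssubset_isEmb_of_patternAt_mem_openIvl ha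
  rw [patternAt_mem_openIvlAbove_iff hE hs ha hSU.subset hS,
    patternAt_mem_openIvlAbove_iff hE hs hb (hSU.subset.trans hUT) hS]

theorem openIvlAbove_nonempty (hmn : m + 2 ≤ n) (hE : ZeroSplitPartition σ π E₁ E₂)
    (hs : StrongCondition π E₁ E₂) : (openIvlAbove σ π E₁).Nonempty := by
  obtain ⟨S, hS⟩ := hE.1
  obtain ⟨z, -, hz⟩ := exists_patternAt_insert_mem_openIvl hmn (hE.isEmb_of_mem_left hS)
  exact ⟨_, (patternAt_mem_openIvlAbove_iff hE hs hz (subset_insert z S)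
    (hE.isEmb_of_mem_left hS)).2 hS⟩

theorem openIvl_diff_openIvlAbove_nonempty (hmn : m + 2 ≤ n)
    (hE : ZeroSplitPartition σ π E₁ E₂) (hs : StrongCondition π E₁ E₂) :
    (openIvl σ π \ openIvlAbove σ π E₁).Nonempty := by
  obtain ⟨S, hS⟩ := hE.2.1
  have hSσ : IsEmb π S σ := (Set.ext_iff.1 hE.2.2.1 S).1 (Or.inr hS)
  obtain ⟨z, -, hz⟩ := exists_patternAt_insert_mem_openIvl hmn hSσ
  exact ⟨_, hz, fun h => (hE.mem_right_iff hSσ).1 hS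
    ((patternAt_mem_openIvlAbove_iff hE hs hz (subset_insert z S) hSσ).1 h)⟩

end ZeroSplitPartition

end openIvl

theorem stmt6_general {m n : ℕ} (σ : Equiv.Perm (Fin m)) (π : Equiv.Perm (Fin n))
    (h3 : 3 ≤ n - m) :
    DisconnRel APle {x : AllPerm | APlt ⟨m, σ⟩ x ∧ APlt x ⟨n, π⟩} ↔
      StronglyZeroSplit σ π := by
  have hmn : m + 3 ≤ n := by omega
  change DisconnRel APle (openIvl σ π) ↔ _
  rw [disconnRel_iff]
  constructor
  · rintro ⟨A, hAI, hA₁, hA₂, hA⟩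
    exact stronglyZeroSplit_of_comparabilityClosed hmn hA hAI hA₁ hA₂
  · rintro ⟨E₁, E₂, hE, hs⟩
    exact ⟨openIvlAbove σ π E₁, fun _ hx => hx.1, openIvlAbove_nonempty (by omega) hE hs,
      openIvl_diff_openIvlAbove_nonempty (by omega) hE hs, comparabilityClosed_openIvlAbove hE hs⟩

/-- For permutations `σ < π` with `n − m ≥ 3`, the open interval
`(σ,π)` is disconnected if and only if `[σ,π]` is strongly zero split. -/
theorem stmt6 {m n : ℕ} (σ : Equiv.Perm (Fin m)) (π : Equiv.Perm (Fin n))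
    (h : PermLT σ π) (h3 : 3 ≤ n - m) :
    DisconnRel APle {x : AllPerm | APlt ⟨m, σ⟩ x ∧ APlt x ⟨n, π⟩} ↔
      StronglyZeroSplit σ π :=
  stmt6_general σ π h3
end

section
/- Let σ < π in the consecutive permutation pattern order, with σ of length m and π of length n. Let W*(σ,π) be the poset of all intervals of consecutive positions J ⊊ {1,…,n} (proper subsets) such that σ ≤ red(π|_J) in the consecutive order, ordered by inclusion, and let Ŵ*(σ,π) be the bounded poset obtained by adjoining a new minimum 0̂ and a new maximum 1̂. Then μ(0̂,1̂) in Ŵ*(σ,π) equals 1 if σ is order-isomorphic to x(π) and σ ≰ i(π) in the consecutive order, and equals 0 otherwise. -/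
attribute [local instance] Classical.propDecidable

/-- The block of `m` consecutive entries of `π` starting at position `i` (0-indexed)
is order-isomorphic to `σ`. -/
def OccAt {m n : ℕ} (σ : Equiv.Perm (Fin m)) (π : Equiv.Perm (Fin n)) (i : ℕ) : Prop :=
  ∃ h : i + m ≤ n, ∀ j k : Fin m, σ j < σ k ↔
    π ⟨i + j.1, lt_of_lt_of_le (Nat.add_lt_add_left j.2 i) h⟩ <
      π ⟨i + k.1, lt_of_lt_of_le (Nat.add_lt_add_left k.2 i) h⟩

/-- Consecutive pattern containment: some block of consecutive entries of `π` is
order-isomorphic to `σ`. -/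
def ConsLE {m n : ℕ} (σ : Equiv.Perm (Fin m)) (π : Equiv.Perm (Fin n)) : Prop :=
  ∃ i : ℕ, OccAt σ π i

/-- Strict consecutive pattern containment. -/
def ConsLT {m n : ℕ} (σ : Equiv.Perm (Fin m)) (π : Equiv.Perm (Fin n)) : Prop :=
  ConsLE σ π ∧ ¬ ConsLE π σ

/-- `σ` is a prefix of `π`. -/
def IsPrefixC {m n : ℕ} (σ : Equiv.Perm (Fin m)) (π : Equiv.Perm (Fin n)) : Prop :=
  OccAt σ π 0

/-- `σ` is a suffix of `π`. -/
def IsSuffixC {m n : ℕ} (σ : Equiv.Perm (Fin m)) (π : Equiv.Perm (Fin n)) : Prop :=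
  OccAt σ π (n - m)

/-- `σ` is a bifix of `π`: both a prefix and a suffix. -/
def IsBifixC {m n : ℕ} (σ : Equiv.Perm (Fin m)) (π : Equiv.Perm (Fin n)) : Prop :=
  IsPrefixC σ π ∧ IsSuffixC σ π

/-- `xp` is the exterior `x(π)` of `π`: the longest bifix of `π` of length strictly
less than `n`. -/
def IsExterior {l n : ℕ} (π : Equiv.Perm (Fin n)) (xp : Equiv.Perm (Fin l)) : Prop :=
  IsBifixC xp π ∧ l < n ∧
    ∀ (b : ℕ) (τ : Equiv.Perm (Fin b)), IsBifixC τ π → b < n → b ≤ l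

/-- `ip` is the interior `i(π)` of `π`: the permutation order-isomorphic to
`π₂…π_{n−1}`. -/
def IsInterior {n : ℕ} (π : Equiv.Perm (Fin n)) (ip : Equiv.Perm (Fin (n - 2))) : Prop :=
  ∀ j k : Fin (n - 2), ip j < ip k ↔
    π ⟨j.1 + 1, by have := j.2; omega⟩ < π ⟨k.1 + 1, by have := k.2; omega⟩

/-- A permutation is monotone if it is order-isomorphic to `12…k` or to `k…21`. -/
def IsMonotoneP {m : ℕ} (σ : Equiv.Perm (Fin m)) : Prop :=
  StrictMono σ ∨ StrictAnti σ

/-- Two permutations are order-isomorphic (the same pattern). -/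
def PermIsoC {a b : ℕ} (σ : Equiv.Perm (Fin a)) (τ : Equiv.Perm (Fin b)) : Prop :=
  ∃ h : a = b, ∀ i j : Fin a,
    σ i < σ j ↔ τ (Fin.cast h i) < τ (Fin.cast h j)

/-- A set of positions consists of consecutive positions (is order-convex). -/
def IsIvl {n : ℕ} (s : Finset (Fin n)) : Prop :=
  ∀ x ∈ s, ∀ y ∈ s, ∀ z : Fin n, x ≤ z → z ≤ y → z ∈ s

/-- `σ` is consecutively contained in the pattern of `π` on the interval of positions
`J`: some occurrence window of `σ` in `π` is contained in `J`. -/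
def ConsLERed {m n : ℕ} (σ : Equiv.Perm (Fin m)) (π : Equiv.Perm (Fin n))
    (J : Finset (Fin n)) : Prop :=
  ∃ i : ℕ, OccAt σ π i ∧ ∀ (t : ℕ) (h : t < n), i ≤ t → t < i + m → (⟨t, h⟩ : Fin n) ∈ J

/-- The poset `W*(σ,π)` of proper intervals of consecutive positions `J ⊊ {1,…,n}`
with `σ ≤ red(π|_J)` in the consecutive order, ordered by inclusion. -/
abbrev WstarP {m n : ℕ} (π : Equiv.Perm (Fin n)) (σ : Equiv.Perm (Fin m)) :=
  {J : Finset (Fin n) // J ≠ Finset.univ ∧ IsIvl J ∧ ConsLERed σ π J}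

/-!
Every proper interval of positions misses the first or the last position, so it lies in
`L = [1, n-1]` or in `R = [2, n]`. When every element of a finite poset lies below `L` or `R`,
inclusion–exclusion on the defining sums of `μ` gives `μ(0̂,1̂) = Σ μ(0̂,x)` over the common
lower bounds `x` of `L` and `R` in the bounded poset. If `σ` occurs inside `π`, away from both
ends, then `L`, `R` and `L ∩ R` all lie in `W*`, the sum runs over a closed interval and vanishes.
Otherwise every occurrence of `σ` is a prefix or a suffix of `π`. If it is only one of the two,
`W*` has a maximum (`L` or `R`) and `μ = 0`. If it is both, `L` and `R` have no common lower
bound in `W*` and `μ = 1`; by maximality of the exterior, a bifix with no inner occurrence is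
exactly `x(π)`.
-/

open Finset IncidenceAlgebra

section Mobius

variable {α : Type*} [PartialOrder α] [Fintype α]

theorem mob_eq_mu {β : Type*} [Preorder β] [Fintype β] [DecidableEq β] [LocallyFiniteOrder β]
    (a b : β) : mob a b = mu ℤ a b := by
  unfold mob
  congr!
  exact Subsingleton.elim _ _

theorem mobHat_eq_sum_of_forall_le_or_le [DecidableEq (Bd α)] [LocallyFiniteOrder (Bd α)]
    (L R : α) (hLR : ∀ x, x ≤ L ∨ x ≤ R) :
    mobHat α = ∑ x ∈ Icc ⊥ (L : Bd α) ∩ Icc ⊥ (R : Bd α), mu ℤ ⊥ x := by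
  have hcover : Icc ⊥ ⊤ = insert ⊤ (Icc ⊥ (L : Bd α) ∪ Icc ⊥ (R : Bd α)) := by
    ext y
    induction y using WithBotTop.rec with
    | bot => simp
    | coe z => simpa using hLR z
    | top => simp
  have hsum := sum_Icc_mu_right (𝕜 := ℤ) (⊥ : Bd α) ⊤
  rw [hcover, sum_insert (by simp)] at hsum
  have hunion := sum_union_inter (s₁ := Icc ⊥ (L : Bd α)) (s₂ := Icc ⊥ (R : Bd α))
    (f := mu ℤ (⊥ : Bd α))
  simp only [sum_Icc_mu_right, WithBotTop.coe_ne_bot, WithBotTop.top_ne_bot,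
    eq_comm (a := (⊥ : Bd α)), if_false] at hsum hunion
  rw [mobHat, mob_eq_mu]
  linarith

theorem mobHat_eq_zero_of_forall_le_and_le_iff (L R M : α) (hLR : ∀ x, x ≤ L ∨ x ≤ R)
    (hM : ∀ x, x ≤ L ∧ x ≤ R ↔ x ≤ M) : mobHat α = 0 := by
  classical
  let := Fintype.toLocallyFiniteOrder (α := Bd α)
  have hmeet : Icc ⊥ (L : Bd α) ∩ Icc ⊥ (R : Bd α) = Icc ⊥ (M : Bd α) := by
    ext y
    induction y using WithBotTop.rec with
    | bot => simp
    | coe z => simpa using hM z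
    | top => simp
  rw [mobHat_eq_sum_of_forall_le_or_le L R hLR, hmeet, sum_Icc_mu_right,
    if_neg (WithBotTop.coe_ne_bot M).symm]

theorem mobHat_eq_zero_of_forall_le (M : α) (hM : ∀ x, x ≤ M) : mobHat α = 0 :=
  mobHat_eq_zero_of_forall_le_and_le_iff M M M (fun x => .inl (hM x)) fun _ => and_self_iff

theorem mobHat_eq_one_of_forall_le_or_le (L R : α) (hLR : ∀ x, x ≤ L ∨ x ≤ R)
    (hLR' : ∀ x, ¬ (x ≤ L ∧ x ≤ R)) : mobHat α = 1 := by
  classical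
  let := Fintype.toLocallyFiniteOrder (α := Bd α)
  have hmeet : Icc ⊥ (L : Bd α) ∩ Icc ⊥ (R : Bd α) = {⊥} := by
    ext y
    induction y using WithBotTop.rec with
    | bot => simp
    | coe z => simpa using hLR' z
    | top => simp
  rw [mobHat_eq_sum_of_forall_le_or_le L R hLR, hmeet, sum_singleton, mu_self]

end Mobius

section Occurrences

variable {m n b : ℕ} {σ : Equiv.Perm (Fin m)} {π : Equiv.Perm (Fin n)} {τ : Equiv.Perm (Fin b)}
  {i j : ℕ}

theorem OccAt.add_le (h : OccAt σ π i) : i + m ≤ n := h.1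

theorem OccAt.trans (hσ : OccAt σ τ i) (hτ : OccAt τ π j) : OccAt σ π (j + i) := by
  obtain ⟨hi, hσ⟩ := hσ
  obtain ⟨hj, hτ⟩ := hτ
  refine ⟨by omega, fun k k' => ?_⟩
  convert (hσ k k').trans (hτ _ _) using 3 <;> simp [Nat.add_assoc]

theorem OccAt.restrict (hσ : OccAt σ π i) (hτ : OccAt τ π j) (hji : j ≤ i)
    (hib : i + m ≤ j + b) : OccAt σ τ (i - j) := by
  obtain ⟨hi, hσ⟩ := hσ
  obtain ⟨hj, hτ⟩ := hτ
  refine ⟨by omega, fun k k' => ?_⟩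
  rw [hσ, hτ]
  congr! 3 <;> simp <;> omega

theorem OccAt.of_permIsoC (hiso : PermIsoC σ τ) (hτ : OccAt τ π i) : OccAt σ π i := by
  obtain ⟨rfl, hiso⟩ := hiso
  exact ⟨hτ.1, fun k k' => (hiso k k').trans (hτ.2 k k')⟩

theorem permIsoC_of_occAt (hσ : OccAt σ π i) (hτ : OccAt τ π i) (h : m = b) : PermIsoC σ τ := by
  subst h
  exact ⟨rfl, fun k k' => (hσ.2 k k').trans (hτ.2 k k').symm⟩

theorem IsInterior.occAt_one {ip : Equiv.Perm (Fin (n - 2))} (hi : IsInterior π ip)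
    (hn : 1 ≤ n) : OccAt ip π 1 :=
  ⟨by omega, fun k k' => by convert hi k k' using 3 <;> simp [Nat.add_comm]⟩

theorem ConsLT.lt (h : ConsLT σ π) : m < n := by
  obtain ⟨⟨i, hi, hσ⟩, hπσ⟩ := h
  refine lt_of_le_of_ne (by omega) fun hmn => hπσ ⟨0, by omega, fun k k' => ?_⟩
  subst hmn
  obtain rfl : i = 0 := by omega
  rw [hσ]
  simp

end Occurrences

section Positions

-- 0-indexed: `posIcc n 0 (n - 2)` is the interval `[1, n-1]` of the paper.
def posIcc (n a b : ℕ) : Finset (Fin n) := univ.filter fun x => a ≤ x.1 ∧ x.1 ≤ b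

variable {m n : ℕ} {σ : Equiv.Perm (Fin m)} {π : Equiv.Perm (Fin n)}

@[simp] theorem mem_posIcc {a b : ℕ} {x : Fin n} : x ∈ posIcc n a b ↔ a ≤ x.1 ∧ x.1 ≤ b := by
  simp [posIcc]

theorem posIcc_inter_posIcc (a b c d : ℕ) :
    posIcc n a b ∩ posIcc n c d = posIcc n (max a c) (min b d) := by
  ext x
  simp only [mem_inter, mem_posIcc, max_le_iff, le_min_iff]
  tauto

theorem isIvl_posIcc (a b : ℕ) : IsIvl (posIcc n a b) := by
  intro x hx y hy z hxz hzy
  simp only [mem_posIcc, Fin.le_def] at *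
  omega

theorem posIcc_ne_univ {a b : ℕ} (hn : 0 < n) (hab : 0 < a ∨ b + 1 < n) :
    posIcc n a b ≠ univ := by
  intro h
  have hall (x : Fin n) : a ≤ x.1 ∧ x.1 ≤ b := mem_posIcc.1 (h ▸ mem_univ x)
  obtain ha | hb := hab
  · have : a ≤ 0 := (hall ⟨0, by omega⟩).1
    omega
  · have : n - 1 ≤ b := (hall ⟨n - 1, by omega⟩).2
    omega

theorem consLERed_posIcc {a b i : ℕ} (hocc : OccAt σ π i) (ha : a ≤ i) (hb : i + m ≤ b + 1) :
    ConsLERed σ π (posIcc n a b) :=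
  ⟨i, hocc, fun t _ _ _ => mem_posIcc.2 (show a ≤ t ∧ t ≤ b by omega)⟩

theorem ConsLERed.exists_occAt_of_subset_posIcc {J : Finset (Fin n)} {a b : ℕ}
    (h : ConsLERed σ π J) (hm : 0 < m) (hJ : J ⊆ posIcc n a b) :
    ∃ i, OccAt σ π i ∧ a ≤ i ∧ i + m ≤ b + 1 := by
  obtain ⟨i, hocc, hwin⟩ := h
  have hfirst := mem_posIcc.1 (hJ (hwin i (by have := hocc.add_le; omega) le_rfl (by omega)))
  have hlast := mem_posIcc.1 (hJ (hwin (i + m - 1) (by have := hocc.add_le; omega) (by omega)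
    (by omega)))
  exact ⟨i, hocc, hfirst.1, by simp only at hlast; omega⟩

theorem subset_posIcc_or_subset_posIcc_of_ne_univ {J : Finset (Fin n)} (hJ : J ≠ univ)
    (hI : IsIvl J) :
    J ⊆ posIcc n 0 (n - 2) ∨ J ⊆ posIcc n 1 (n - 1) := by
  by_contra! hcon
  obtain ⟨⟨x, hxJ, hx⟩, ⟨y, hyJ, hy⟩⟩ := And.imp not_subset.1 not_subset.1 hcon
  simp only [mem_posIcc] at hx hy
  refine hJ (eq_univ_of_forall fun z => hI y hyJ x hxJ z ?_ ?_) <;> rw [Fin.le_def] <;> omega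

end Positions

section Inside

variable {m n : ℕ} {σ : Equiv.Perm (Fin m)} {π : Equiv.Perm (Fin n)}

def OccursInside (σ : Equiv.Perm (Fin m)) (π : Equiv.Perm (Fin n)) : Prop :=
  ∃ i, OccAt σ π i ∧ 0 < i ∧ i + m < n

theorem consLE_iff_occursInside {ip : Equiv.Perm (Fin (n - 2))} (hi : IsInterior π ip)
    (hn : 2 ≤ n) : ConsLE σ ip ↔ OccursInside σ π := by
  have hip := hi.occAt_one (by omega)
  constructor
  · rintro ⟨i, hocc⟩
    exact ⟨1 + i, hocc.trans hip, by omega, by have := hocc.add_le; omega⟩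
  · rintro ⟨i, hocc, hi0, hin⟩
    exact ⟨i - 1, hocc.restrict hip hi0 (by omega)⟩

theorem eq_zero_or_eq_sub_of_not_occursInside {i : ℕ} (hin : ¬ OccursInside σ π)
    (hocc : OccAt σ π i) : i = 0 ∨ i = n - m := by
  have := hocc.add_le
  by_contra! h
  exact hin ⟨i, hocc, by omega, by omega⟩

theorem permIsoC_iff_of_isExterior {l : ℕ} {xp : Equiv.Perm (Fin l)} (hx : IsExterior π xp)
    (hin : ¬ OccursInside σ π) (hmn : m < n) :
    PermIsoC σ xp ↔ OccAt σ π 0 ∧ OccAt σ π (n - m) := by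
  obtain ⟨⟨hxpre, hxsuf⟩, hln, hmax⟩ := hx
  constructor
  · intro hiso
    obtain rfl : m = l := hiso.1
    exact ⟨hxpre.of_permIsoC hiso, hxsuf.of_permIsoC hiso⟩
  · rintro ⟨hpre, hsuf⟩
    obtain hml | rfl := (hmax m σ ⟨hpre, hsuf⟩ hmn).lt_or_eq
    · -- a shorter bifix is a suffix of `xp`, hence occurs inside `π` right before position `l`
      have hocc := (hsuf.restrict hxsuf (by omega) (by omega)).trans hxpre
      exact absurd ⟨_, hocc, by omega, by omega⟩ hin
    · exact permIsoC_of_occAt hpre hxpre rfl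

end Inside

section WstarMobius

variable {m n : ℕ} {σ : Equiv.Perm (Fin m)} {π : Equiv.Perm (Fin n)}

theorem posIcc_mem_wstarP (a b : ℕ) {i : ℕ} (hab : 0 < a ∨ b + 1 < n)
    (hocc : OccAt σ π i) (ha : a ≤ i) (hb : i + m ≤ b + 1) :
    posIcc n a b ≠ univ ∧ IsIvl (posIcc n a b) ∧ ConsLERed σ π (posIcc n a b) :=
  ⟨posIcc_ne_univ (by have := hocc.add_le; omega) hab, isIvl_posIcc a b,
    consLERed_posIcc hocc ha hb⟩

theorem WstarP.subset_posIcc_or_subset_posIcc (J : WstarP π σ) :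
    J.1 ⊆ posIcc n 0 (n - 2) ∨ J.1 ⊆ posIcc n 1 (n - 1) :=
  subset_posIcc_or_subset_posIcc_of_ne_univ J.2.1 J.2.2.1

theorem mobHat_wstarP_of_le_one (hn : n ≤ 1) (hmn : m < n) : mobHat (WstarP π σ) = 0 := by
  obtain rfl : m = 0 := by omega
  have : Subsingleton (Fin n) := Fin.subsingleton_iff_le_one.2 hn
  have hempty : (∅ : Finset (Fin n)) ≠ univ ∧ IsIvl (∅ : Finset (Fin n)) ∧
      ConsLERed σ π ∅ :=
    ⟨(univ_nonempty_iff.2 ⟨⟨0, hmn⟩⟩).ne_empty.symm, by simp [IsIvl],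
      0, ⟨by omega, fun k => k.elim0⟩, fun t _ _ _ => by omega⟩
  exact mobHat_eq_zero_of_forall_le ⟨∅, hempty⟩ fun J x hx =>
    (J.2.1 (eq_univ_of_forall fun y => Subsingleton.elim x y ▸ hx)).elim

theorem mobHat_wstarP_of_occursInside (hin : OccursInside σ π) : mobHat (WstarP π σ) = 0 := by
  obtain ⟨i, hocc, hi0, hin⟩ := hin
  refine mobHat_eq_zero_of_forall_le_and_le_iff
    ⟨_, posIcc_mem_wstarP 0 (n - 2) (by omega) hocc (Nat.zero_le i) (by omega)⟩
    ⟨_, posIcc_mem_wstarP 1 (n - 1) (by omega) hocc hi0 (by omega)⟩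
    ⟨_, posIcc_mem_wstarP 1 (n - 2) (by omega) hocc hi0 (by omega)⟩
    WstarP.subset_posIcc_or_subset_posIcc fun J => ?_
  change J.1 ⊆ _ ∧ J.1 ⊆ _ ↔ J.1 ⊆ _
  rw [← subset_inter_iff, posIcc_inter_posIcc, max_eq_right zero_le_one,
    min_eq_left (by omega)]

theorem mobHat_wstarP_of_bifix (hin : ¬ OccursInside σ π) (hm : 0 < m) (hmn : m < n)
    (hpre : OccAt σ π 0) (hsuf : OccAt σ π (n - m)) : mobHat (WstarP π σ) = 1 := by
  refine mobHat_eq_one_of_forall_le_or_le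
    ⟨_, posIcc_mem_wstarP 0 (n - 2) (by omega) hpre le_rfl (by omega)⟩
    ⟨_, posIcc_mem_wstarP 1 (n - 1) (by omega) hsuf (by omega) (by omega)⟩
    WstarP.subset_posIcc_or_subset_posIcc fun J hJ => hin ?_
  change J.1 ⊆ _ ∧ J.1 ⊆ _ at hJ
  rw [← subset_inter_iff, posIcc_inter_posIcc] at hJ
  obtain ⟨i, hocc, hi, hin⟩ := J.2.2.2.exists_occAt_of_subset_posIcc hm hJ
  exact ⟨i, hocc, by omega, by omega⟩

theorem mobHat_wstarP_of_prefix (hin : ¬ OccursInside σ π) (hm : 0 < m) (hmn : m < n)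
    (hpre : OccAt σ π 0) (hsuf : ¬ OccAt σ π (n - m)) : mobHat (WstarP π σ) = 0 := by
  refine mobHat_eq_zero_of_forall_le
    ⟨_, posIcc_mem_wstarP 0 (n - 2) (by omega) hpre le_rfl (by omega)⟩
    fun J => (J.subset_posIcc_or_subset_posIcc).resolve_right fun hJ => ?_
  obtain ⟨i, hocc, hi, -⟩ := J.2.2.2.exists_occAt_of_subset_posIcc hm hJ
  obtain rfl | rfl := eq_zero_or_eq_sub_of_not_occursInside hin hocc
  exacts [absurd hi (by omega), hsuf hocc]

theorem mobHat_wstarP_of_suffix (hin : ¬ OccursInside σ π) (hm : 0 < m) (hmn : m < n)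
    (hpre : ¬ OccAt σ π 0) (hsuf : OccAt σ π (n - m)) : mobHat (WstarP π σ) = 0 := by
  refine mobHat_eq_zero_of_forall_le
    ⟨_, posIcc_mem_wstarP 1 (n - 1) (by omega) hsuf (by omega) (by omega)⟩
    fun J => (J.subset_posIcc_or_subset_posIcc).resolve_left fun hJ => ?_
  obtain ⟨i, hocc, -, hi⟩ := J.2.2.2.exists_occAt_of_subset_posIcc hm hJ
  obtain rfl | rfl := eq_zero_or_eq_sub_of_not_occursInside hin hocc
  exacts [hpre hocc, absurd hi (by omega)]

end WstarMobius

/-- For `σ < π` in the consecutive order, the Möbius function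
`μ(0̂,1̂)` of the bounded poset `Ŵ*(σ,π)` equals `1` if `σ` is order-isomorphic to
`x(π)` and `σ ≰ i(π)`, and equals `0` otherwise. -/
theorem stmt11 {m n l : ℕ} (σ : Equiv.Perm (Fin m)) (π : Equiv.Perm (Fin n))
    (xp : Equiv.Perm (Fin l)) (ip : Equiv.Perm (Fin (n - 2)))
    (hx : IsExterior π xp) (hi : IsInterior π ip)
    (h : ConsLT σ π) :
    (PermIsoC σ xp ∧ ¬ ConsLE σ ip → mobHat (WstarP π σ) = 1) ∧
    (¬ (PermIsoC σ xp ∧ ¬ ConsLE σ ip) → mobHat (WstarP π σ) = 0) := by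
  have hmn := h.lt
  obtain hn | hn := le_or_gt n 1
  · obtain rfl : m = 0 := by omega
    have hip : ConsLE σ ip := ⟨0, by omega, fun k => k.elim0⟩
    simp [hip, mobHat_wstarP_of_le_one hn hmn]
  rw [consLE_iff_occursInside hi hn]
  by_cases hin : OccursInside σ π
  · simp [hin, mobHat_wstarP_of_occursInside hin]
  have hm : 0 < m := Nat.pos_of_ne_zero fun hm0 =>
    hin ⟨1, ⟨by omega, fun k => (hm0 ▸ k).elim0⟩, one_pos, by omega⟩
  rw [permIsoC_iff_of_isExterior hx hin hmn]
  by_cases hpre : OccAt σ π 0 <;> by_cases hsuf : OccAt σ π (n - m)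
  · simp [hin, hpre, hsuf, mobHat_wstarP_of_bifix hin hm hmn hpre hsuf]
  · simp [hin, hsuf, mobHat_wstarP_of_prefix hin hm hmn hpre hsuf]
  · simp [hin, hpre, mobHat_wstarP_of_suffix hin hm hmn hpre hsuf]
  · obtain ⟨i, hocc⟩ := h.1
    obtain rfl | rfl := eq_zero_or_eq_sub_of_not_occursInside hin hocc
    exacts [absurd hocc hpre, absurd hocc hsuf]
end
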